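/- arXiv:0803.3170 — 8 statements merged into one kernel-verified Lean document; each statement's English description precedes it below -/
import Mathlib

section
/- For every natural number n ≥ 1, the sum over integers p with p ≠ n and p ≠ -n of 1/(n²-p²)² is strictly less than 4/n². -/
/-!
Writing `1/(n² - p²) = (1/(n - p) + 1/(n + p)) / (2n)` and using `(x + y)² ≤ 2(x² + y²)`, each term
is at most `(1/(n - p)² + 1/(n + p)²) / (2n²)`. Both shifted sums equal `∑_{k ∈ ℤ} 1/k² = π²/3`, so
the whole sum is at most `π²/(3n²)`, and `π² < 12`.
-/

open Real

theorem hasSum_int_one_div_sq : HasSum (fun k : ℤ => 1 / (k : ℝ) ^ 2) (π ^ 2 / 3) := by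
  rw [show π ^ 2 / 3 = π ^ 2 / 6 + π ^ 2 / 6 - 1 / ((0 : ℤ) : ℝ) ^ 2 by norm_num; ring]
  exact .of_nat_of_neg (by simpa using hasSum_zeta_two) (by simpa using hasSum_zeta_two)

theorem hasSum_int_one_div_add_sq (a : ℤ) :
    HasSum (fun k : ℤ => 1 / ((a : ℝ) + k) ^ 2) (π ^ 2 / 3) := by
  convert (Equiv.addLeft a).hasSum_iff.2 hasSum_int_one_div_sq using 2 with k
  simp

theorem hasSum_int_one_div_sub_sq (a : ℤ) :
    HasSum (fun k : ℤ => 1 / ((a : ℝ) - k) ^ 2) (π ^ 2 / 3) := by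
  convert (Equiv.subLeft a).hasSum_iff.2 hasSum_int_one_div_sq using 2 with k
  simp

theorem one_div_mul_sq_mul_add_sq_le (a b : ℝ) :
    1 / (a * b) ^ 2 * (a + b) ^ 2 ≤ 2 * (1 / a ^ 2 + 1 / b ^ 2) := by
  rcases eq_or_ne a 0 with rfl | ha
  · simp only [zero_mul, zero_pow two_ne_zero, div_zero, zero_mul]
    positivity
  rcases eq_or_ne b 0 with rfl | hb
  · simp only [mul_zero, zero_pow two_ne_zero, div_zero, zero_mul]
    positivity
  calc 1 / (a * b) ^ 2 * (a + b) ^ 2 = (1 / a + 1 / b) ^ 2 := by field_simp; ring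
    _ ≤ 2 * ((1 / a) ^ 2 + (1 / b) ^ 2) := add_sq_le
    _ = 2 * (1 / a ^ 2 + 1 / b ^ 2) := by rw [one_div_pow, one_div_pow]

theorem one_div_sq_sub_sq_sq_le {n : ℝ} (hn : n ≠ 0) (p : ℝ) :
    1 / (n ^ 2 - p ^ 2) ^ 2 ≤ 1 / (2 * n ^ 2) * (1 / (n - p) ^ 2 + 1 / (n + p) ^ 2) := by
  calc 1 / (n ^ 2 - p ^ 2) ^ 2
      = 1 / (2 * n) ^ 2 * (1 / ((n - p) * (n + p)) ^ 2 * ((n - p) + (n + p)) ^ 2) := by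
        rw [show (n - p) + (n + p) = 2 * n by ring, show n ^ 2 - p ^ 2 = (n - p) * (n + p) by ring]
        field_simp
    _ ≤ 1 / (2 * n) ^ 2 * (2 * (1 / (n - p) ^ 2 + 1 / (n + p) ^ 2)) :=
        mul_le_mul_of_nonneg_left (one_div_mul_sq_mul_add_sq_le _ _) (by positivity)
    _ = 1 / (2 * n ^ 2) * (1 / (n - p) ^ 2 + 1 / (n + p) ^ 2) := by
        field_simp

/-- `s` is arbitrary because the termwise bound also holds at `p = ±n`, where `1 / 0 = 0`. -/
theorem tsum_subtype_one_div_sq_sub_sq_le {n : ℤ} (hn : n ≠ 0) (s : Set ℤ) :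
    ∑' p : s, 1 / ((n : ℝ) ^ 2 - (p : ℝ) ^ 2) ^ 2 ≤ π ^ 2 / (3 * (n : ℝ) ^ 2) := by
  have hn' : (n : ℝ) ≠ 0 := by exact_mod_cast hn
  have hmajorant : HasSum (fun p : ℤ => 1 / (2 * (n : ℝ) ^ 2) *
      (1 / ((n : ℝ) - p) ^ 2 + 1 / ((n : ℝ) + p) ^ 2)) (π ^ 2 / (3 * (n : ℝ) ^ 2)) := by
    rw [show π ^ 2 / (3 * (n : ℝ) ^ 2) = 1 / (2 * (n : ℝ) ^ 2) * (π ^ 2 / 3 + π ^ 2 / 3) by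
      field_simp; ring]
    exact ((hasSum_int_one_div_sub_sq n).add (hasSum_int_one_div_add_sq n)).mul_left _
  have hle := fun p : ℤ => one_div_sq_sub_sq_sq_le hn' p
  have hsum := hmajorant.summable.of_nonneg_of_le (fun _ => by positivity) hle
  calc _ ≤ ∑' p : ℤ, 1 / ((n : ℝ) ^ 2 - (p : ℝ) ^ 2) ^ 2 :=
        hsum.tsum_subtype_le _ s fun _ => by positivity
    _ ≤ π ^ 2 / (3 * (n : ℝ) ^ 2) := hmajorant.tsum_eq ▸ hsum.tsum_le_tsum hle hmajorant.summable

/-- For `n ≥ 1`, the sum over integers `p ≠ ±n` of `1/(n²-p²)²` is strictly less than `4/n²`. -/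
theorem stmt1 (n : ℕ) (hn : 1 ≤ n) :
    ∑' p : {p : ℤ // p ≠ (n : ℤ) ∧ p ≠ -(n : ℤ)},
      (1 : ℝ) / ((n : ℝ) ^ 2 - ((p.1 : ℤ) : ℝ) ^ 2) ^ 2 < 4 / (n : ℝ) ^ 2 := by
  have hn0 : (0 : ℝ) < n := by exact_mod_cast hn
  have hpi : π ^ 2 < 12 := by nlinarith [pi_lt_d2, pi_pos]
  calc _ ≤ π ^ 2 / (3 * (n : ℝ) ^ 2) := by
        exact_mod_cast tsum_subtype_one_div_sq_sub_sq_le (n := (n : ℤ)) (by omega)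
          {p | p ≠ (n : ℤ) ∧ p ≠ -(n : ℤ)}
    _ < 4 / (n : ℝ) ^ 2 := by
        rw [div_lt_div_iff₀ (by positivity) (by positivity)]
        nlinarith [mul_lt_mul_of_pos_right hpi (pow_pos hn0 2)]
end

section
/- There is an absolute constant C such that for every square-summable sequence r = (r(k)) on ℤ and every N ≥ 1, the double sum over n > N and integers k ≠ n of |r(n+k)|²/(n-k)² is at most C·(‖r‖²/N + E_N(r)²), where E_N(r)² = Σ_{|k|≥N} |r(k)|² and ‖r‖ is the ℓ² norm. -/
open scoped ENNReal

/-- Square of the ℓ² norm of a real sequence on ℤ. -/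
noncomputable def l2norm2 (r : ℤ → ℝ) : ℝ≥0∞ := ∑' k : ℤ, ENNReal.ofReal ((r k) ^ 2)

/-- Square of the ℓ² tail norm `E_N(r)² = Σ_{|k| ≥ N} |r(k)|²`. -/
noncomputable def tailNorm2 (r : ℤ → ℝ) (N : ℕ) : ℝ≥0∞ :=
  ∑' k : {k : ℤ // (N : ℤ) ≤ |k|}, ENNReal.ofReal ((r k.1) ^ 2)

lemma partial_sum_le (c : ℝ) (hc : 1 ≤ c) (n : ℕ) :
    ∑ t ∈ Finset.range n, (1:ℝ)/(c+t)^2 ≤ 2/c := by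
  have key : ∀ t : ℕ, (1:ℝ)/(c+t)^2 ≤ 2*((fun t : ℕ => 1/(c+t)) t - (fun t : ℕ => 1/(c+t)) (t+1)) := by
    intro t
    have h1 : (1:ℝ) ≤ c + t := by
      have : (0:ℝ) ≤ t := Nat.cast_nonneg t
      linarith
    have h0 : (0:ℝ) < c + t := by linarith
    have h0' : (0:ℝ) < c + (t+1:ℕ) := by push_cast; linarith
    have : (fun t : ℕ => (1:ℝ)/(c+t)) t - (fun t : ℕ => 1/(c+t)) (t+1)
        = 1/((c+t)*(c+t+1)) := by
      simp only []
      push_cast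
      rw [div_sub_div _ _ (by positivity) (by positivity)]
      congr 1 <;> push_cast <;> ring
    rw [this, mul_one_div, div_le_div_iff₀ (by positivity) (by positivity)]
    nlinarith
  calc ∑ t ∈ Finset.range n, (1:ℝ)/(c+t)^2
      ≤ ∑ t ∈ Finset.range n, 2*((fun t : ℕ => 1/(c+t)) t - (fun t : ℕ => 1/(c+t)) (t+1)) :=
        Finset.sum_le_sum fun t _ => key t
    _ = 2*((fun t : ℕ => 1/(c+t)) 0 - (fun t : ℕ => 1/(c+t)) n) := by
        rw [← Finset.mul_sum, Finset.sum_range_sub']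
    _ ≤ 2/c := by
        have h0 : (0:ℝ) < c := by linarith
        have h1 : (0:ℝ) ≤ 1/(c+(n:ℝ)) := by positivity
        simp only []
        rw [Nat.cast_zero, add_zero]
        rw [mul_sub]
        have : 2*(1/c) = 2/c := by ring
        linarith [this]

lemma tsum_shift_le (c : ℝ) (hc : 1 ≤ c) :
    ∑' t : ℕ, ENNReal.ofReal (1/(c+t)^2) ≤ ENNReal.ofReal (2/c) := by
  rw [ENNReal.tsum_eq_iSup_nat]
  refine iSup_le fun n => ?_
  rw [← ENNReal.ofReal_sum_of_nonneg (fun t _ => by positivity)]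
  exact ENNReal.ofReal_le_ofReal (partial_sum_le c hc n)

lemma zsum_le : ∑' j : ℤ, ENNReal.ofReal (1/(j:ℝ)^2) ≤ ENNReal.ofReal 4 := by
  rw [tsum_of_nat_of_neg_add_one ENNReal.summable ENNReal.summable]
  have h1 : ∑' t : ℕ, ENNReal.ofReal (1/((t:ℤ):ℝ)^2) ≤ ENNReal.ofReal 2 := by
    rw [tsum_eq_zero_add' ENNReal.summable]
    have e0 : ENNReal.ofReal (1/(((0:ℕ):ℤ):ℝ)^2) = 0 := by norm_num
    rw [e0, zero_add]
    calc ∑' t : ℕ, ENNReal.ofReal (1/(((t+1:ℕ):ℤ):ℝ)^2)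
        = ∑' t : ℕ, ENNReal.ofReal (1/((1:ℝ)+t)^2) := by
          apply tsum_congr; intro t; congr 2; push_cast; ring
      _ ≤ ENNReal.ofReal (2/1) := tsum_shift_le 1 le_rfl
      _ = ENNReal.ofReal 2 := by norm_num
  have h2 : ∑' t : ℕ, ENNReal.ofReal (1/(((-(t+1):ℤ)):ℝ)^2) ≤ ENNReal.ofReal 2 := by
    calc ∑' t : ℕ, ENNReal.ofReal (1/(((-(t+1):ℤ)):ℝ)^2)
        = ∑' t : ℕ, ENNReal.ofReal (1/((1:ℝ)+t)^2) := by
          apply tsum_congr; intro t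
          congr 1
          push_cast
          ring_nf
      _ ≤ ENNReal.ofReal (2/1) := tsum_shift_le 1 le_rfl
      _ = ENNReal.ofReal 2 := by norm_num
  calc _ ≤ ENNReal.ofReal 2 + ENNReal.ofReal 2 := add_le_add h1 h2
    _ = ENNReal.ofReal 4 := by rw [← ENNReal.ofReal_add] <;> norm_num

/-- There is an absolute constant `C` such that for every `r ∈ ℓ²(ℤ)` and every `N ≥ 1`,
`Σ_{n>N} Σ_{k≠n} |r(n+k)|²/(n-k)² ≤ C (‖r‖²/N + E_N(r)²)`. -/
theorem stmt3 : ∃ C : ℝ, 0 < C ∧ ∀ r : ℤ → ℝ, Summable (fun k => (r k) ^ 2) →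
    ∀ N : ℕ, 1 ≤ N →
    ∑' n : {n : ℤ // (N : ℤ) < n}, ∑' k : {k : ℤ // k ≠ n.1},
      ENNReal.ofReal ((r (n.1 + k.1)) ^ 2 / ((n.1 : ℝ) - (k.1 : ℝ)) ^ 2)
    ≤ ENNReal.ofReal C * (l2norm2 r / (N : ℝ≥0∞) + tailNorm2 r N) := by
  refine ⟨4, by norm_num, fun r _ N hN => ?_⟩
  set T : ℤ → ℝ≥0∞ := fun m =>
    ∑' n : {n : ℤ // (N:ℤ) < n}, ENNReal.ofReal (1/(((2*n.1 - m : ℤ)):ℝ)^2) with hT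
  -- Step 1: rewrite LHS
  have inner_eq : ∀ n : {n : ℤ // (N:ℤ) < n},
      (∑' k : {k : ℤ // k ≠ n.1},
        ENNReal.ofReal ((r (n.1 + k.1)) ^ 2 / ((n.1 : ℝ) - (k.1 : ℝ)) ^ 2))
      = ∑' m : ℤ, ENNReal.ofReal ((r m)^2 / (((2*n.1 - m : ℤ)):ℝ)^2) := by
    intro n
    have h1 : (∑' k : {k : ℤ // k ≠ n.1},
        ENNReal.ofReal ((r (n.1 + k.1)) ^ 2 / ((n.1 : ℝ) - (k.1 : ℝ)) ^ 2))
        = ∑' k : ℤ, ENNReal.ofReal ((r (n.1 + k)) ^ 2 / ((n.1 : ℝ) - (k : ℝ)) ^ 2) := by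
      have key : (∑' k : ↥{k : ℤ | k ≠ (n.1:ℤ)},
          ENNReal.ofReal ((r (n.1 + k.1)) ^ 2 / ((n.1 : ℝ) - (k.1 : ℝ)) ^ 2))
          = ∑' k : ℤ, ENNReal.ofReal ((r (n.1 + k)) ^ 2 / ((n.1 : ℝ) - (k : ℝ)) ^ 2) := by
        apply tsum_subtype_eq_of_support_subset
          (f := fun k : ℤ => ENNReal.ofReal ((r (n.1 + k)) ^ 2 / ((n.1 : ℝ) - (k : ℝ)) ^ 2))
          (s := {k : ℤ | k ≠ (n.1:ℤ)})
        intro k hk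
        simp only [Function.mem_support] at hk
        intro hkn
        apply hk
        rw [hkn]
        simp
      exact key
    rw [h1]
    have h2 : ∀ k : ℤ, ENNReal.ofReal ((r (n.1 + k)) ^ 2 / ((n.1 : ℝ) - (k : ℝ)) ^ 2)
        = (fun m : ℤ => ENNReal.ofReal ((r m)^2 / (((2*n.1 - m : ℤ)):ℝ)^2)) (n.1 + k) := by
      intro k
      simp only []
      congr 2
      push_cast
      ring
    rw [tsum_congr h2]
    have := Equiv.tsum_eq (Equiv.addLeft (n.1 : ℤ))
      (fun m : ℤ => ENNReal.ofReal ((r m)^2 / (((2*n.1 - m : ℤ)):ℝ)^2))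
    simpa using this
  have step1 : (∑' n : {n : ℤ // (N : ℤ) < n}, ∑' k : {k : ℤ // k ≠ n.1},
      ENNReal.ofReal ((r (n.1 + k.1)) ^ 2 / ((n.1 : ℝ) - (k.1 : ℝ)) ^ 2))
      = ∑' m : ℤ, ENNReal.ofReal ((r m)^2) * T m := by
    rw [tsum_congr inner_eq, ENNReal.tsum_comm]
    apply tsum_congr
    intro m
    rw [hT]
    simp only []
    rw [← ENNReal.tsum_mul_left]
    apply tsum_congr
    intro n
    rw [← ENNReal.ofReal_mul (sq_nonneg _), mul_one_div]
  -- bounds on T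
  have Tb_gen : ∀ m : ℤ, T m ≤ ENNReal.ofReal 4 := by
    intro m
    refine le_trans ?_ zsum_le
    exact ENNReal.tsum_comp_le_tsum_of_injective
      (f := fun n : {n : ℤ // (N:ℤ) < n} => 2*n.1 - m)
      (fun a b hab => by
        apply Subtype.ext
        simp only [] at hab
        omega) _
  have Tb_small : ∀ m : ℤ, |m| < (N:ℤ) → T m ≤ 2 / (N:ℝ≥0∞) := by
    intro m hm
    rw [abs_lt] at hm
    have hstep : T m ≤ ∑' t : ℕ, ENNReal.ofReal (1/(((N:ℝ)+1)+t)^2) := by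
      have hval : ∀ n : {n : ℤ // (N:ℤ) < n},
          ENNReal.ofReal (1/(((2*n.1 - m : ℤ)):ℝ)^2)
          = (fun t : ℕ => ENNReal.ofReal (1/(((N:ℝ)+1)+t)^2))
              ((2*n.1 - m - ((N:ℤ)+1)).toNat) := by
        intro n
        have hn := n.2
        have h1 : (0:ℤ) ≤ 2*n.1 - m - ((N:ℤ)+1) := by omega
        have h2 : (((2*n.1 - m - ((N:ℤ)+1)).toNat : ℕ) : ℤ) = 2*n.1 - m - ((N:ℤ)+1) :=
          Int.toNat_of_nonneg h1
        have h4 : ((2*n.1 - m : ℤ) : ℝ)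
            = ((N:ℝ)+1)+(((2*n.1 - m - ((N:ℤ)+1)).toNat : ℕ) : ℝ) := by
          rw [show (((2*n.1 - m - ((N:ℤ)+1)).toNat : ℕ) : ℝ)
              = ((((2*n.1 - m - ((N:ℤ)+1)).toNat : ℕ) : ℤ) : ℝ) by push_cast; ring, h2]
          push_cast
          ring
        simp only [h4]
      rw [hT]
      simp only []
      rw [tsum_congr hval]
      apply ENNReal.tsum_comp_le_tsum_of_injective
      intro a b hab
      have ha := a.2
      have hb := b.2
      apply Subtype.ext
      simp only [] at hab
      omega
    refine hstep.trans ((tsum_shift_le ((N:ℝ)+1) (by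
      have : (1:ℝ) ≤ (N:ℝ) := by exact_mod_cast hN
      linarith)).trans ?_)
    have hNpos : (0:ℝ) < (N:ℝ) := by exact_mod_cast hN
    calc ENNReal.ofReal (2/((N:ℝ)+1)) ≤ ENNReal.ofReal (2/(N:ℝ)) := by
          apply ENNReal.ofReal_le_ofReal
          apply div_le_div_of_nonneg_left (by norm_num) hNpos (by linarith)
      _ = 2 / (N:ℝ≥0∞) := by
          rw [ENNReal.ofReal_div_of_pos hNpos]
          norm_num
  -- split the sum
  set s : Set ℤ := {m : ℤ | (N:ℤ) ≤ |m|} with hs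
  have split : (∑' m : ℤ, ENNReal.ofReal ((r m)^2) * T m)
      = (∑' m : s, ENNReal.ofReal ((r m.1)^2) * T m.1)
        + ∑' m : ↥sᶜ, ENNReal.ofReal ((r m.1)^2) * T m.1 :=
    (Summable.tsum_add_tsum_compl ENNReal.summable ENNReal.summable).symm
  have htail : (∑' m : s, ENNReal.ofReal ((r m.1)^2) * T m.1)
      ≤ ENNReal.ofReal 4 * tailNorm2 r N := by
    calc (∑' m : s, ENNReal.ofReal ((r m.1)^2) * T m.1)
        ≤ ∑' m : s, ENNReal.ofReal ((r m.1)^2) * ENNReal.ofReal 4 :=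
          ENNReal.tsum_le_tsum fun m => mul_le_mul_right (Tb_gen m.1) _
      _ = (∑' m : s, ENNReal.ofReal ((r m.1)^2)) * ENNReal.ofReal 4 :=
          ENNReal.tsum_mul_right
      _ = ENNReal.ofReal 4 * tailNorm2 r N := by
          rw [mul_comm]
          rfl
  have hsmall : (∑' m : ↥sᶜ, ENNReal.ofReal ((r m.1)^2) * T m.1)
      ≤ 2 * (l2norm2 r / (N:ℝ≥0∞)) := by
    calc (∑' m : ↥sᶜ, ENNReal.ofReal ((r m.1)^2) * T m.1)
        ≤ ∑' m : ↥sᶜ, ENNReal.ofReal ((r m.1)^2) * (2/(N:ℝ≥0∞)) := by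
          refine ENNReal.tsum_le_tsum fun m => mul_le_mul_right (Tb_small m.1 ?_) _
          have hm := m.2
          simp only [hs, Set.mem_compl_iff, Set.mem_setOf_eq, not_le] at hm
          exact hm
      _ = (∑' m : ↥sᶜ, ENNReal.ofReal ((r m.1)^2)) * (2/(N:ℝ≥0∞)) :=
          ENNReal.tsum_mul_right
      _ ≤ l2norm2 r * (2/(N:ℝ≥0∞)) :=
          mul_le_mul_left
            (ENNReal.tsum_comp_le_tsum_of_injective Subtype.val_injective _) _
      _ = 2 * (l2norm2 r / (N:ℝ≥0∞)) := by
          simp only [div_eq_mul_inv]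
          ring
  rw [step1, split]
  have hof4 : (ENNReal.ofReal 4 : ℝ≥0∞) = 4 := by
    norm_num
  calc (∑' m : s, ENNReal.ofReal ((r m.1)^2) * T m.1)
        + (∑' m : ↥sᶜ, ENNReal.ofReal ((r m.1)^2) * T m.1)
      ≤ ENNReal.ofReal 4 * tailNorm2 r N + 2 * (l2norm2 r / (N:ℝ≥0∞)) :=
        add_le_add htail hsmall
    _ ≤ ENNReal.ofReal 4 * (l2norm2 r / (N:ℝ≥0∞) + tailNorm2 r N) := by
        rw [hof4, mul_add]
        have h2 : (2:ℝ≥0∞)*(l2norm2 r/(N:ℝ≥0∞)) ≤ 4*(l2norm2 r/(N:ℝ≥0∞)) :=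
          mul_le_mul_left (by norm_num) _
        exact (add_comm _ _).trans_le (add_le_add h2 le_rfl)
end

section
/- There is an absolute constant C such that for every r ∈ ℓ²(ℤ) and every N ≥ 1, Σ_{n>N} Σ_{k≠n} (n+k)²/(n²(n-k)²) · |r(n+k)|² ≤ C·(‖r‖²/N + E_N(r)²). -/
open scoped ENNReal

/-!
Since `2n = (n + k) + (n - k)`, we have `(n + k) / (n (n - k)) = 2 / (n - k) - 1 / n`, so the
weight is at most `8 / (n - k)² + 2 / n²`. The `2 / n²` part costs
`2 ∑_{n > N} n⁻² ‖r‖² ≤ 4 ‖r‖² / N`.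
For the `8 / (n - k)²` part: when `|n + k| < N < n` we have `k < 0`, hence `|n + k| ≤ |n - k|`
and the whole weight is already at most `1 / n²`; otherwise `r (n + k)` is a tail coefficient,
and since `n ↦ n + k = 2n - j` is injective for fixed `j = n - k`, this part is at most
`∑_{j ≠ 0} 8 / j² · E_N(r)² ≤ 32 E_N(r)²`.
-/

theorem tsum_inv_sq_gt_le (N : ℕ) :
    ∑' n : {n : ℤ // (N : ℤ) < n}, ENNReal.ofReal ((n : ℝ) ^ 2)⁻¹ ≤
      ENNReal.ofReal (2 / (N + 1)) := by
  refine ENNReal.tsum_eq_iSup_sum ▸ iSup_le fun s => ?_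
  have hinj : Function.Injective fun n : {n : ℤ // (N : ℤ) < n} => n.1.toNat :=
    fun a b (h : a.1.toNat = b.1.toNat) => by have := a.2; have := b.2; ext; omega
  let t : Finset ℕ := s.map ⟨_, hinj⟩
  have hcast : ∀ n : {n : ℤ // (N : ℤ) < n}, ((n.1.toNat : ℕ) : ℝ) = n := fun n => by
    have := n.2; exact_mod_cast Int.toNat_of_nonneg (by omega)
  have ht : t ⊆ Finset.Ioo N (t.sup id + 1) := fun m hm => by
    obtain ⟨n, -, rfl⟩ := Finset.mem_map.1 hm
    exact Finset.mem_Ioo.2 ⟨Int.lt_toNat.2 n.2, Nat.lt_succ_of_le (Finset.le_sup (f := id) hm)⟩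
  calc ∑ n ∈ s, ENNReal.ofReal ((n : ℝ) ^ 2)⁻¹
      = ENNReal.ofReal (∑ m ∈ t, ((m : ℝ) ^ 2)⁻¹) := by
        rw [ENNReal.ofReal_sum_of_nonneg fun _ _ => by positivity, Finset.sum_map]
        simp only [Function.Embedding.coeFn_mk, hcast]
    _ ≤ ENNReal.ofReal (∑ m ∈ Finset.Ioo N (t.sup id + 1), ((m : ℝ) ^ 2)⁻¹) :=
        ENNReal.ofReal_le_ofReal <|
          Finset.sum_le_sum_of_subset_of_nonneg ht fun _ _ _ => by positivity
    _ ≤ ENNReal.ofReal (2 / (N + 1)) := ENNReal.ofReal_le_ofReal (sum_Ioo_inv_sq_le _ _)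

theorem tsum_inv_sq_ne_zero_le :
    ∑' j : {j : ℤ // j ≠ 0}, ENNReal.ofReal ((j : ℝ) ^ 2)⁻¹ ≤ 4 := by
  have hsplit : {j : ℤ | j ≠ 0} = {j | 0 < j} ∪ {j | j < 0} := by
    ext j; exact ne_iff_lt_or_gt.trans or_comm
  have hpos := tsum_inv_sq_gt_le 0
  have hneg : ∑' j : {j : ℤ // j < 0}, ENNReal.ofReal ((j : ℝ) ^ 2)⁻¹ ≤
      ∑' n : {n : ℤ // 0 < n}, ENNReal.ofReal ((n : ℝ) ^ 2)⁻¹ := by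
    refine le_of_eq_of_le (tsum_congr fun j => ?_)
      (ENNReal.tsum_comp_le_tsum_of_injective (f := fun j : {j : ℤ // j < 0} =>
        (⟨-j.1, neg_pos.2 j.2⟩ : {n : ℤ // 0 < n})) (fun a b h => by ext; simpa using h) _)
    simp
  calc ∑' j : {j : ℤ // j ≠ 0}, ENNReal.ofReal ((j : ℝ) ^ 2)⁻¹
      = ∑' j : ↥({j : ℤ | 0 < j} ∪ {j | j < 0}), ENNReal.ofReal ((j : ℝ) ^ 2)⁻¹ := by
        rw [← hsplit]; rfl
    _ ≤ ∑' n : {n : ℤ // 0 < n}, ENNReal.ofReal ((n : ℝ) ^ 2)⁻¹ +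
          ∑' j : {j : ℤ // j < 0}, ENNReal.ofReal ((j : ℝ) ^ 2)⁻¹ :=
        ENNReal.tsum_union_le (fun j : ℤ => ENNReal.ofReal ((j : ℝ) ^ 2)⁻¹) _ _
    _ ≤ ENNReal.ofReal 2 + ENNReal.ofReal 2 := by
        gcongr
        · simpa using hpos
        · exact hneg.trans (by simpa using hpos)
    _ = 4 := by norm_num

theorem tsum_tsum_ne_mul_le (w f : ℤ → ℝ≥0∞) :
    ∑' n : ℤ, ∑' k : {k : ℤ // k ≠ n}, w (n - k) * f (n + k) ≤
      (∑' j : {j : ℤ // j ≠ 0}, w j) * ∑' m, f m := by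
  have hreindex (n : ℤ) : ∑' k : {k : ℤ // k ≠ n}, w (n - k) * f (n + k) =
      ∑' j : {j : ℤ // j ≠ 0}, w j * f (2 * n - j) := by
    let e : {j : ℤ // j ≠ 0} ≃ {k : ℤ // k ≠ n} :=
      (Equiv.subLeft n).subtypeEquiv fun j => by simp
    rw [← e.tsum_eq]
    refine tsum_congr fun j => ?_
    simp only [e, Equiv.subtypeEquiv_apply, Equiv.subLeft_apply, sub_sub_cancel]
    ring_nf
  calc ∑' n : ℤ, ∑' k : {k : ℤ // k ≠ n}, w (n - k) * f (n + k)
      = ∑' j : {j : ℤ // j ≠ 0}, w j * ∑' n, f (2 * n - j) := by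
        simp_rw [hreindex, ← ENNReal.tsum_mul_left]; exact ENNReal.tsum_comm
    _ ≤ ∑' j : {j : ℤ // j ≠ 0}, w j * ∑' m, f m := by
        refine ENNReal.tsum_le_tsum fun j => mul_le_mul_right ?_ _
        exact ENNReal.tsum_comp_le_tsum_of_injective (fun a b h => by simpa using h) f
    _ = (∑' j : {j : ℤ // j ≠ 0}, w j) * ∑' m, f m := ENNReal.tsum_mul_right

theorem add_sq_div_le (a b : ℝ) (ha : a ≠ 0) (hab : a - b ≠ 0) :
    (a + b) ^ 2 / (a ^ 2 * (a - b) ^ 2) ≤ 8 * ((a - b) ^ 2)⁻¹ + 2 * (a ^ 2)⁻¹ := by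
  have key : (a + b) / (a * (a - b)) = 2 / (a - b) - 1 / a := by field_simp; ring
  calc (a + b) ^ 2 / (a ^ 2 * (a - b) ^ 2) = (2 / (a - b) - 1 / a) ^ 2 := by
        rw [← key, div_pow, mul_pow]
    _ ≤ 2 * (2 / (a - b)) ^ 2 + 2 * (1 / a) ^ 2 := by
        nlinarith [sq_nonneg (2 / (a - b) + 1 / a)]
    _ = 8 * ((a - b) ^ 2)⁻¹ + 2 * (a ^ 2)⁻¹ := by generalize a - b = c; ring

theorem add_sq_div_le_of_nonpos {a b : ℝ} (ha : 0 < a) (hb : b ≤ 0) :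
    (a + b) ^ 2 / (a ^ 2 * (a - b) ^ 2) ≤ (a ^ 2)⁻¹ := by
  have hab : 0 < a - b := by linarith
  rw [div_le_iff₀ (by positivity), inv_mul_cancel_left₀ (by positivity)]
  nlinarith

noncomputable def tailSq (r : ℤ → ℝ) (N : ℕ) : ℤ → ℝ≥0∞ :=
  {m : ℤ | (N : ℤ) ≤ |m|}.indicator fun m => ENNReal.ofReal (r m ^ 2)

theorem tsum_tailSq (r : ℤ → ℝ) (N : ℕ) : ∑' m, tailSq r N m = tailNorm2 r N :=
  (tsum_subtype _ _).symm

theorem ofReal_coeff_mul_sq_le (r : ℤ → ℝ) (N : ℕ) {n k : ℤ} (hn : (N : ℤ) < n)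
    (hk : k ≠ n) :
    ENNReal.ofReal (((n : ℝ) + k) ^ 2 / ((n : ℝ) ^ 2 * ((n : ℝ) - k) ^ 2) * r (n + k) ^ 2) ≤
      8 * ENNReal.ofReal (((n - k : ℤ) : ℝ) ^ 2)⁻¹ * tailSq r N (n + k) +
        2 * ENNReal.ofReal ((n : ℝ) ^ 2)⁻¹ * ENNReal.ofReal (r (n + k) ^ 2) := by
  have ha : (0 : ℝ) < n := by exact_mod_cast (Int.natCast_nonneg N).trans_lt hn
  have hab : (n : ℝ) - k ≠ 0 := sub_ne_zero.2 (by exact_mod_cast hk.symm)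
  rw [Int.cast_sub]
  by_cases htail : (N : ℤ) ≤ |n + k|
  · simp only [tailSq, Set.indicator_apply, Set.mem_ofPred_eq, if_pos htail]
    calc _ ≤ ENNReal.ofReal (8 * (((n : ℝ) - k) ^ 2)⁻¹ * r (n + k) ^ 2 +
            2 * ((n : ℝ) ^ 2)⁻¹ * r (n + k) ^ 2) := by
          refine ENNReal.ofReal_le_ofReal ?_
          rw [← add_mul]
          exact mul_le_mul_of_nonneg_right (add_sq_div_le _ _ ha.ne' hab) (sq_nonneg _)
      _ ≤ _ := by
          refine ENNReal.ofReal_add_le.trans_eq ?_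
          rw [ENNReal.ofReal_mul (by positivity), ENNReal.ofReal_mul (by positivity),
            ENNReal.ofReal_mul (by positivity), ENNReal.ofReal_mul (by positivity),
            ENNReal.ofReal_ofNat, ENNReal.ofReal_ofNat]
  · simp only [tailSq, Set.indicator_apply, Set.mem_ofPred_eq, if_neg htail, mul_zero, zero_add]
    have hk : (k : ℝ) ≤ 0 := by
      have := le_abs_self (n + k); exact_mod_cast (by omega : k ≤ 0)
    calc _ ≤ ENNReal.ofReal (2 * ((n : ℝ) ^ 2)⁻¹ * r (n + k) ^ 2) := by
          refine ENNReal.ofReal_le_ofReal (mul_le_mul_of_nonneg_right ?_ (sq_nonneg _))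
          exact (add_sq_div_le_of_nonpos ha hk).trans
            (le_mul_of_one_le_left (by positivity) one_le_two)
      _ = _ := by
          rw [ENNReal.ofReal_mul (by positivity), ENNReal.ofReal_mul (by positivity),
            ENNReal.ofReal_ofNat]

theorem tsum_tail_part_le (r : ℤ → ℝ) (N : ℕ) :
    ∑' n : {n : ℤ // (N : ℤ) < n}, ∑' k : {k : ℤ // k ≠ n.1},
      8 * ENNReal.ofReal (((n.1 - k.1 : ℤ) : ℝ) ^ 2)⁻¹ * tailSq r N (n.1 + k.1) ≤
        32 * tailNorm2 r N := by
  let w : ℤ → ℝ≥0∞ := fun j => 8 * ENNReal.ofReal ((j : ℝ) ^ 2)⁻¹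
  calc _ ≤ ∑' n : ℤ, ∑' k : {k : ℤ // k ≠ n}, w (n - k) * tailSq r N (n + k) :=
        ENNReal.tsum_comp_le_tsum_of_injective Subtype.val_injective
          (fun n => ∑' k : {k : ℤ // k ≠ n}, w (n - k) * tailSq r N (n + k))
    _ ≤ (∑' j : {j : ℤ // j ≠ 0}, w j) * ∑' m, tailSq r N m := tsum_tsum_ne_mul_le _ _
    _ ≤ 8 * 4 * tailNorm2 r N := by
        rw [ENNReal.tsum_mul_left, tsum_tailSq]
        gcongr
        exact tsum_inv_sq_ne_zero_le
    _ = 32 * tailNorm2 r N := by norm_num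

theorem tsum_l2_part_le (r : ℤ → ℝ) {N : ℕ} (hN : 1 ≤ N) :
    ∑' n : {n : ℤ // (N : ℤ) < n}, 2 * ENNReal.ofReal ((n.1 : ℝ) ^ 2)⁻¹ *
      ∑' k : {k : ℤ // k ≠ n.1}, ENNReal.ofReal (r (n.1 + k.1) ^ 2) ≤
        4 * (l2norm2 r / N) := by
  have hinv : ENNReal.ofReal (2 / (N + 1)) ≤ 2 / N := by
    have hN' : (0 : ℝ) < N := by exact_mod_cast hN
    rw [← ENNReal.ofReal_natCast, ← ENNReal.ofReal_ofNat 2, ← ENNReal.ofReal_div_of_pos hN']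
    exact ENNReal.ofReal_le_ofReal (div_le_div_of_nonneg_left zero_le_two hN' (by linarith))
  calc _ ≤ ∑' n : {n : ℤ // (N : ℤ) < n},
          2 * ENNReal.ofReal ((n.1 : ℝ) ^ 2)⁻¹ * l2norm2 r :=
        ENNReal.tsum_le_tsum fun n => mul_le_mul_right
          (ENNReal.tsum_comp_le_tsum_of_injective
            (fun a b h => Subtype.ext (add_left_cancel h)) _) _
    _ = 2 * (∑' n : {n : ℤ // (N : ℤ) < n}, ENNReal.ofReal ((n.1 : ℝ) ^ 2)⁻¹) *
          l2norm2 r := by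
        rw [ENNReal.tsum_mul_right, ENNReal.tsum_mul_left]
    _ ≤ 2 * (2 / N) * l2norm2 r := by grw [tsum_inv_sq_gt_le N, hinv]
    _ = 4 * (l2norm2 r / N) := by
        rw [div_eq_mul_inv, div_eq_mul_inv, ← mul_assoc, mul_right_comm, mul_assoc]; norm_num

/-- There is an absolute constant `C` such that for every `r ∈ ℓ²(ℤ)` and every `N ≥ 1`,
`Σ_{n>N} Σ_{k≠n} (n+k)²/(n²(n-k)²) |r(n+k)|² ≤ C (‖r‖²/N + E_N(r)²)`. -/
theorem stmt4 : ∃ C : ℝ, 0 < C ∧ ∀ r : ℤ → ℝ, Summable (fun k => (r k) ^ 2) →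
    ∀ N : ℕ, 1 ≤ N →
    ∑' n : {n : ℤ // (N : ℤ) < n}, ∑' k : {k : ℤ // k ≠ n.1},
      ENNReal.ofReal (((n.1 : ℝ) + (k.1 : ℝ)) ^ 2 /
        ((n.1 : ℝ) ^ 2 * ((n.1 : ℝ) - (k.1 : ℝ)) ^ 2) * (r (n.1 + k.1)) ^ 2)
    ≤ ENNReal.ofReal C * (l2norm2 r / (N : ℝ≥0∞) + tailNorm2 r N) := by
  refine ⟨32, by norm_num, fun r _ N hN => ?_⟩
  calc _ ≤ ∑' n : {n : ℤ // (N : ℤ) < n}, ∑' k : {k : ℤ // k ≠ n.1},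
          (8 * ENNReal.ofReal (((n.1 - k.1 : ℤ) : ℝ) ^ 2)⁻¹ * tailSq r N (n.1 + k.1) +
            2 * ENNReal.ofReal ((n.1 : ℝ) ^ 2)⁻¹ * ENNReal.ofReal (r (n.1 + k.1) ^ 2)) :=
        ENNReal.tsum_le_tsum fun n => ENNReal.tsum_le_tsum fun k =>
          ofReal_coeff_mul_sq_le r N n.2 k.2
    _ ≤ 32 * tailNorm2 r N + 4 * (l2norm2 r / N) := by
        simp_rw [ENNReal.tsum_add, ENNReal.tsum_mul_left]
        exact add_le_add (tsum_tail_part_le r N) (tsum_l2_part_le r hN)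
    _ ≤ ENNReal.ofReal 32 * (l2norm2 r / N + tailNorm2 r N) := by
        rw [ENNReal.ofReal_ofNat, mul_add, add_comm]
        gcongr
        norm_num
end

section
/- There is an absolute constant C such that for every r ∈ ℓ²(ℤ) with r(k) ≥ 0 and every N ≥ 1: Σ_{n>N} Σ_{p≠±n} (n/(n²-p²)²)·r(2n)² · Σ_{k≠±n} ((k+p)²/|n²-k²|)·r(k+p)² ≤ C·‖r‖²·E_N(r)², where E_N(r)² = Σ_{|k|≥N} r(k)². -/
open scoped ENNReal
open Real

-- sum over ℕ of 1/n²
lemma znat : ∑' q : ℕ, ENNReal.ofReal (1/(q:ℝ)^2) ≤ ENNReal.ofReal 3 := by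
  have hs : HasSum (fun n : ℕ => (1:ℝ) / (n : ℝ) ^ 2) (π ^ 2 / 6) := hasSum_zeta_two
  have h0 : ∀ n : ℕ, 0 ≤ (1:ℝ)/(n:ℝ)^2 := fun n => by positivity
  rw [← ENNReal.ofReal_tsum_of_nonneg h0 hs.summable]
  refine ENNReal.ofReal_le_ofReal ?_
  rw [hs.tsum_eq]
  nlinarith [pi_le_four, pi_pos]

lemma zint : ∑' q : ℤ, ENNReal.ofReal (1/(q:ℝ)^2) ≤ ENNReal.ofReal 6 := by
  have hsplit := tsum_of_nat_of_neg_add_one (f := fun q : ℤ => ENNReal.ofReal (1/(q:ℝ)^2))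
    ENNReal.summable ENNReal.summable
  rw [hsplit]
  have h2 : ∑' n : ℕ, ENNReal.ofReal (1/((-(n+1) : ℤ):ℝ)^2) ≤ ENNReal.ofReal 3 := by
    have : ∀ n : ℕ, ENNReal.ofReal (1/((-(n+1) : ℤ):ℝ)^2)
        = (fun q : ℕ => ENNReal.ofReal (1/(q:ℝ)^2)) (n+1) := by
      intro n; push_cast; ring_nf
    calc ∑' n : ℕ, ENNReal.ofReal (1/((-(n+1) : ℤ):ℝ)^2)
        = ∑' n : ℕ, (fun q : ℕ => ENNReal.ofReal (1/(q:ℝ)^2)) (n+1) := tsum_congr this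
      _ ≤ ∑' q : ℕ, ENNReal.ofReal (1/(q:ℝ)^2) :=
          ENNReal.tsum_comp_le_tsum_of_injective (add_left_injective 1) _
      _ ≤ ENNReal.ofReal 3 := znat
  have h1 : ∑' n : ℕ, ENNReal.ofReal (1/((n:ℤ):ℝ)^2) ≤ ENNReal.ofReal 3 := by
    simpa using znat
  calc (∑' n : ℕ, ENNReal.ofReal (1/((n:ℤ):ℝ)^2)) + ∑' n : ℕ, ENNReal.ofReal (1/((-(n+1) : ℤ):ℝ)^2)
      ≤ ENNReal.ofReal 3 + ENNReal.ofReal 3 := add_le_add h1 h2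
    _ = ENNReal.ofReal 6 := by rw [← ENNReal.ofReal_add] <;> norm_num

lemma zint3 : ∑' q : ℤ, ENNReal.ofReal (1/|(q:ℝ)|^3) ≤ ENNReal.ofReal 6 := by
  refine le_trans (ENNReal.tsum_le_tsum (fun q => ?_)) zint
  refine ENNReal.ofReal_le_ofReal ?_
  rcases eq_or_ne q 0 with rfl | hq
  · norm_num
  · have h1 : (1:ℝ) ≤ |(q:ℝ)| := by
      have := Int.one_le_abs hq
      calc (1:ℝ) ≤ ((|q| : ℤ) : ℝ) := by exact_mod_cast this
        _ = |(q:ℝ)| := by push_cast; ring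
    have h2 : (q:ℝ)^2 = |(q:ℝ)|^2 := (sq_abs _).symm
    rw [h2]
    apply one_div_le_one_div_of_le (by positivity)
    calc |(q:ℝ)|^2 = |(q:ℝ)|^2 * 1 := by ring
      _ ≤ |(q:ℝ)|^2 * |(q:ℝ)| := by nlinarith
      _ = |(q:ℝ)|^3 := by ring

lemma ztrans2 (c : ℤ) : ∑' p : ℤ, ENNReal.ofReal (1/((p:ℝ)-(c:ℝ))^2) ≤ ENNReal.ofReal 6 := by
  have h := (Equiv.addRight c).tsum_eq (fun p : ℤ => ENNReal.ofReal (1/((p:ℝ)-(c:ℝ))^2))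
  rw [← h]
  calc ∑' q : ℤ, ENNReal.ofReal (1/(((q + c : ℤ):ℝ)-(c:ℝ))^2)
      = ∑' q : ℤ, ENNReal.ofReal (1/(q:ℝ)^2) := by
        refine tsum_congr (fun q => ?_); congr 2; push_cast; ring
    _ ≤ _ := zint

lemma ztrans3 (c : ℤ) : ∑' p : ℤ, ENNReal.ofReal (1/|(p:ℝ)-(c:ℝ)|^3) ≤ ENNReal.ofReal 6 := by
  have h := (Equiv.addRight c).tsum_eq (fun p : ℤ => ENNReal.ofReal (1/|(p:ℝ)-(c:ℝ)|^3))
  rw [← h]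
  calc ∑' q : ℤ, ENNReal.ofReal (1/|((q + c : ℤ):ℝ)-(c:ℝ)|^3)
      = ∑' q : ℤ, ENNReal.ofReal (1/|(q:ℝ)|^3) := by
        refine tsum_congr (fun q => ?_); congr 3; push_cast; ring
    _ ≤ _ := zint3

lemma min_cases_bound {u v : ℝ} (hu : 0 < u) (hv : 0 < v) (s : ℕ) :
    1/(min u v)^s ≤ 1/u^s + 1/v^s := by
  rcases le_total u v with h | h
  · rw [min_eq_left h]
    have : (0:ℝ) ≤ 1/v^s := by positivity
    linarith
  · rw [min_eq_right h]
    have : (0:ℝ) ≤ 1/u^s := by positivity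
    linarith

set_option maxHeartbeats 1200000 in
lemma real_pt {x A B a b P K : ℝ} (hx : 1 ≤ x) (hA : 1 ≤ A) (hB : 1 ≤ B)
    (ha : 1 ≤ a) (hb : 1 ≤ b) (hAB : x ≤ max A B) (hab : x ≤ max a b)
    (hP : |P| ≤ x + min A B) (hK : |K| ≤ x + min a b) :
    x/(A*B)^2 * ((K+P)^2/(a*b)) ≤ 16*(1/A^2+1/B^2) + 12*(1/a^3+1/b^3) := by
  set M := min A B with hM
  set m := min a b with hm
  have hM1 : 1 ≤ M := le_min hA hB
  have hm1 : 1 ≤ m := le_min ha hb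
  have hMpos : 0 < M := by linarith
  have hmpos : 0 < m := by linarith
  have hxpos : 0 < x := by linarith
  have hApos : 0 < A := by linarith
  have hBpos : 0 < B := by linarith
  have hapos : 0 < a := by linarith
  have hbpos : 0 < b := by linarith
  -- product lower bounds
  have hAB1 : M * x ≤ A * B := by
    rcases le_total A B with h | h
    · rw [hM, min_eq_left h]
      have : x ≤ B := le_trans hAB (by rw [max_eq_right h])
      nlinarith
    · rw [hM, min_eq_right h]
      have : x ≤ A := le_trans hAB (by rw [max_eq_left h])
      nlinarith
  have hAB2 : M^2 ≤ A * B := by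
    have h1 : M ≤ A := min_le_left _ _
    have h2 : M ≤ B := min_le_right _ _
    nlinarith
  have hab1 : m * x ≤ a * b := by
    rcases le_total a b with h | h
    · rw [hm, min_eq_left h]
      have : x ≤ b := le_trans hab (by rw [max_eq_right h])
      nlinarith
    · rw [hm, min_eq_right h]
      have : x ≤ a := le_trans hab (by rw [max_eq_left h])
      nlinarith
  have hab2 : m^2 ≤ a * b := by
    have h1 : m ≤ a := min_le_left _ _
    have h2 : m ≤ b := min_le_right _ _
    nlinarith
  have hd1 : M^2 * x^2 ≤ (A*B)^2 := by
    have h := mul_le_mul hAB1 hAB1 (by positivity) (by positivity)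
    calc M^2 * x^2 = (M*x)*(M*x) := by ring
      _ ≤ (A*B)*(A*B) := h
      _ = (A*B)^2 := by ring
  have hd2 : M^3 * x ≤ (A*B)^2 := by
    have h := mul_le_mul hAB2 hAB1 (by positivity) (by positivity)
    calc M^3 * x = (M^2)*(M*x) := by ring
      _ ≤ (A*B)*(A*B) := h
      _ = (A*B)^2 := by ring
  -- numerator bound
  have hKP : x*(K+P)^2 ≤ 8*x^3 + 4*x*M^2 + 4*x*m^2 := by
    have h1 : P^2 ≤ (x + M)^2 := by
      have h := mul_self_le_mul_self (abs_nonneg P) hP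
      calc P^2 = (|P|)*(|P|) := by rw [← sq_abs P]; ring
        _ ≤ (x+M)*(x+M) := h
        _ = (x+M)^2 := by ring
    have h2 : K^2 ≤ (x + m)^2 := by
      have h := mul_self_le_mul_self (abs_nonneg K) hK
      calc K^2 = (|K|)*(|K|) := by rw [← sq_abs K]; ring
        _ ≤ (x+m)*(x+m) := h
        _ = (x+m)^2 := by ring
    have h3 : (K+P)^2 ≤ 2*K^2 + 2*P^2 := by nlinarith [sq_nonneg (K-P)]
    have h4 : (x+M)^2 ≤ 2*x^2 + 2*M^2 := by nlinarith [sq_nonneg (x-M)]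
    have h5 : (x+m)^2 ≤ 2*x^2 + 2*m^2 := by nlinarith [sq_nonneg (x-m)]
    have h6 : (K+P)^2 ≤ 8*x^2 + 4*M^2 + 4*m^2 := by linarith
    calc x*(K+P)^2 ≤ x*(8*x^2 + 4*M^2 + 4*m^2) :=
          mul_le_mul_of_nonneg_left h6 hxpos.le
      _ = 8*x^3 + 4*x*M^2 + 4*x*m^2 := by ring
  have hden : (0:ℝ) < (A*B)^2 * (a*b) := by positivity
  have step1 : x/(A*B)^2 * ((K+P)^2/(a*b)) = (x*(K+P)^2) / ((A*B)^2 * (a*b)) := by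
    field_simp
  rw [step1]
  have step2 : (x*(K+P)^2) / ((A*B)^2 * (a*b)) ≤ 8/(M^2*m) + 4/(M*m^2) + 4/M^2 := by
    have t1 : (8*x^3) / ((A*B)^2 * (a*b)) ≤ 8/(M^2*m) := by
      rw [div_le_div_iff₀ hden (by positivity)]
      have : (M^2*x^2) * (m*x) ≤ (A*B)^2 * (a*b) :=
        mul_le_mul hd1 hab1 (by positivity) (by positivity)
      nlinarith
    have t2 : (4*x*M^2) / ((A*B)^2 * (a*b)) ≤ 4/(M*m^2) := by
      rw [div_le_div_iff₀ hden (by positivity)]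
      have : (M^3*x) * (m^2) ≤ (A*B)^2 * (a*b) :=
        mul_le_mul hd2 hab2 (by positivity) (by positivity)
      nlinarith
    have t3 : (4*x*m^2) / ((A*B)^2 * (a*b)) ≤ 4/M^2 := by
      rw [div_le_div_iff₀ hden (by positivity)]
      have : (M^2*x^2) * (m^2) ≤ (A*B)^2 * (a*b) :=
        mul_le_mul hd1 hab2 (by positivity) (by positivity)
      nlinarith
    calc (x*(K+P)^2) / ((A*B)^2 * (a*b))
        ≤ (8*x^3 + 4*x*M^2 + 4*x*m^2) / ((A*B)^2 * (a*b)) := by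
          gcongr
      _ = (8*x^3) / ((A*B)^2 * (a*b)) + (4*x*M^2) / ((A*B)^2 * (a*b))
            + (4*x*m^2) / ((A*B)^2 * (a*b)) := by ring
      _ ≤ 8/(M^2*m) + 4/(M*m^2) + 4/M^2 := by linarith
  refine step2.trans ?_
  -- split mixed terms
  have u1 : 8/(M^2*m) ≤ 8/M^3 + 8/m^3 := by
    rcases le_total M m with h | h
    · have : M^3 ≤ M^2*m := by nlinarith [mul_le_mul h h hMpos.le hmpos.le]
      have h8 : 8/(M^2*m) ≤ 8/M^3 := by
        apply div_le_div_of_nonneg_left (by norm_num) (by positivity) this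
      have : (0:ℝ) ≤ 8/m^3 := by positivity
      linarith
    · have : m^3 ≤ M^2*m := by nlinarith [mul_le_mul h h hmpos.le hMpos.le]
      have h8 : 8/(M^2*m) ≤ 8/m^3 := by
        apply div_le_div_of_nonneg_left (by norm_num) (by positivity) this
      have : (0:ℝ) ≤ 8/M^3 := by positivity
      linarith
  have u2 : 4/(M*m^2) ≤ 4/M^3 + 4/m^3 := by
    rcases le_total M m with h | h
    · have : M^3 ≤ M*m^2 := by nlinarith [mul_le_mul h h hMpos.le hmpos.le]
      have h4 : 4/(M*m^2) ≤ 4/M^3 := by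
        apply div_le_div_of_nonneg_left (by norm_num) (by positivity) this
      have : (0:ℝ) ≤ 4/m^3 := by positivity
      linarith
    · have : m^3 ≤ M*m^2 := by nlinarith [mul_le_mul h h hmpos.le hMpos.le]
      have h4 : 4/(M*m^2) ≤ 4/m^3 := by
        apply div_le_div_of_nonneg_left (by norm_num) (by positivity) this
      have : (0:ℝ) ≤ 4/M^3 := by positivity
      linarith
  have u3 : 12/M^3 ≤ 12/M^2 := by
    have : M^2 ≤ M^3 := by nlinarith
    apply div_le_div_of_nonneg_left (by norm_num) (by positivity) this
  have vM : 1/M^2 ≤ 1/A^2 + 1/B^2 := min_cases_bound hApos hBpos 2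
  have vm : 1/m^3 ≤ 1/a^3 + 1/b^3 := min_cases_bound hapos hbpos 3
  have : 8/(M^2*m) + 4/(M*m^2) + 4/M^2 ≤ 16/M^2 + 12/m^3 := by
    have e1 : 8/M^3 + 4/M^3 = 12/M^3 := by ring
    have e2 : 12/M^2 + 4/M^2 = 16/M^2 := by ring
    have e3 : 8/m^3 + 4/m^3 = 12/m^3 := by ring
    linarith
  refine this.trans ?_
  calc 16/M^2 + 12/m^3 = 16*(1/M^2) + 12*(1/m^3) := by ring
    _ ≤ 16*(1/A^2+1/B^2) + 12*(1/a^3+1/b^3) := by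
      have h16 : (0:ℝ) ≤ 16 := by norm_num
      nlinarith

lemma one_le_abs_cast {u v : ℤ} (h : u ≠ v) : 1 ≤ |(u:ℝ) - (v:ℝ)| := by
  have h1 : 1 ≤ |u - v| := Int.one_le_abs (sub_ne_zero.mpr h)
  calc (1:ℝ) ≤ ((|u - v| : ℤ) : ℝ) := by exact_mod_cast h1
    _ = |(u:ℝ) - (v:ℝ)| := by push_cast; ring_nf

lemma key_pt (n p k : ℤ) (hn : 2 ≤ n) (hp1 : p ≠ n) (hp2 : p ≠ -n)
    (hk1 : k ≠ n) (hk2 : k ≠ -n) :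
    ((n:ℝ)/((n:ℝ)^2-(p:ℝ)^2)^2) * (((k:ℝ)+(p:ℝ))^2/|(n:ℝ)^2-(k:ℝ)^2|)
      ≤ 16*(1/((p:ℝ)-(n:ℝ))^2 + 1/((p:ℝ)+(n:ℝ))^2)
        + 12*(1/|(k:ℝ)-(n:ℝ)|^3 + 1/|(k:ℝ)+(n:ℝ)|^3) := by
  set x : ℝ := (n:ℝ) with hxdef
  set P : ℝ := (p:ℝ)
  set K : ℝ := (k:ℝ)
  set A : ℝ := |P - x| with hAdef
  set B : ℝ := |P + x| with hBdef
  set a : ℝ := |K - x| with hadef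
  set b : ℝ := |K + x| with hbdef
  have hx : 1 ≤ x := by
    rw [hxdef]; exact_mod_cast (by omega : (1:ℤ) ≤ n)
  have hA : 1 ≤ A := one_le_abs_cast hp1
  have hB : 1 ≤ B := by
    have := one_le_abs_cast hp2
    simpa [sub_neg_eq_add] using this
  have ha : 1 ≤ a := one_le_abs_cast hk1
  have hb : 1 ≤ b := by
    have := one_le_abs_cast hk2
    simpa [sub_neg_eq_add] using this
  have hAB : x ≤ max A B := by
    have h1 : 2*x ≤ B + A := by
      calc 2*x = |(P + x) - (P - x)| := by rw [abs_of_nonneg (by linarith)]; ring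
        _ ≤ B + A := abs_sub _ _
    rcases le_total A B with h | h
    · rw [max_eq_right h]; linarith
    · rw [max_eq_left h]; linarith
  have hab : x ≤ max a b := by
    have h1 : 2*x ≤ b + a := by
      calc 2*x = |(K + x) - (K - x)| := by rw [abs_of_nonneg (by linarith)]; ring
        _ ≤ b + a := abs_sub _ _
    rcases le_total a b with h | h
    · rw [max_eq_right h]; linarith
    · rw [max_eq_left h]; linarith
  have hP : |P| ≤ x + min A B := by
    have h1 : |P| ≤ x + A := by
      calc |P| = |x + (P - x)| := by ring_nf
        _ ≤ |x| + A := abs_add_le _ _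
        _ = x + A := by rw [abs_of_nonneg (by linarith)]
    have h2 : |P| ≤ x + B := by
      calc |P| = |(P + x) + (-x)| := by ring_nf
        _ ≤ B + |(-x)| := abs_add_le _ _
        _ = x + B := by rw [abs_neg, abs_of_nonneg (by linarith)]; ring
    rcases le_total A B with h | h
    · rw [min_eq_left h]; exact h1
    · rw [min_eq_right h]; exact h2
  have hK : |K| ≤ x + min a b := by
    have h1 : |K| ≤ x + a := by
      calc |K| = |x + (K - x)| := by ring_nf
        _ ≤ |x| + a := abs_add_le _ _
        _ = x + a := by rw [abs_of_nonneg (by linarith)]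
    have h2 : |K| ≤ x + b := by
      calc |K| = |(K + x) + (-x)| := by ring_nf
        _ ≤ b + |(-x)| := abs_add_le _ _
        _ = x + b := by rw [abs_neg, abs_of_nonneg (by linarith)]; ring
    rcases le_total a b with h | h
    · rw [min_eq_left h]; exact h1
    · rw [min_eq_right h]; exact h2
  have main := real_pt hx hA hB ha hb hAB hab hP hK
  have eq1 : (x^2 - P^2)^2 = (A*B)^2 := by
    rw [hAdef, hBdef, ← abs_mul]
    rw [sq_abs]
    ring_nf
  have eq2 : |x^2 - K^2| = a*b := by
    calc |x^2 - K^2| = |(K - x)*(K + x)| := by rw [abs_sub_comm]; congr 1; ring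
      _ = a*b := by rw [hadef, hbdef, ← abs_mul]
  rw [eq1, eq2] at *
  have eqA : ((p:ℝ)-(n:ℝ))^2 = A^2 := by rw [hAdef, sq_abs]
  have eqB : ((p:ℝ)+(n:ℝ))^2 = B^2 := by rw [hBdef, sq_abs]
  rw [eqA, eqB]
  calc x/(A*B)^2 * ((K+P)^2/(a*b)) ≤ _ := main

-- shifted l2 sum
lemma sum_shift (r : ℤ → ℝ) (c : ℤ) :
    ∑' j : ℤ, ENNReal.ofReal ((r (j + c))^2) = l2norm2 r := by
  have h := (Equiv.addRight c).tsum_eq (fun m : ℤ => ENNReal.ofReal ((r m)^2))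
  simpa [l2norm2] using h

lemma subSum_le (r : ℤ → ℝ) (n c : ℤ) :
    ∑' j : {j : ℤ // j ≠ n ∧ j ≠ -n}, ENNReal.ofReal ((r (j.1 + c))^2) ≤ l2norm2 r := by
  calc ∑' j : {j : ℤ // j ≠ n ∧ j ≠ -n}, ENNReal.ofReal ((r (j.1 + c))^2)
      ≤ ∑' j : ℤ, ENNReal.ofReal ((r (j + c))^2) :=
        ENNReal.tsum_comp_le_tsum_of_injective Subtype.val_injective
          (fun j => ENNReal.ofReal ((r (j + c))^2))
    _ = l2norm2 r := sum_shift r c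

-- p-type scalar sums
lemma psum_le (n : ℤ) :
    ∑' p : {p : ℤ // p ≠ n ∧ p ≠ -n},
      ENNReal.ofReal (16*(1/((p.1:ℝ)-(n:ℝ))^2 + 1/((p.1:ℝ)+(n:ℝ))^2))
      ≤ ENNReal.ofReal 192 := by
  have hpt : ∀ p : {p : ℤ // p ≠ n ∧ p ≠ -n},
      ENNReal.ofReal (16*(1/((p.1:ℝ)-(n:ℝ))^2 + 1/((p.1:ℝ)+(n:ℝ))^2))
      = ENNReal.ofReal 16 *
        (ENNReal.ofReal (1/((p.1:ℝ)-(n:ℝ))^2) + ENNReal.ofReal (1/((p.1:ℝ)+(n:ℝ))^2)) := by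
    intro p
    rw [ENNReal.ofReal_mul (by norm_num), ENNReal.ofReal_add (by positivity) (by positivity)]
  calc ∑' p : {p : ℤ // p ≠ n ∧ p ≠ -n},
        ENNReal.ofReal (16*(1/((p.1:ℝ)-(n:ℝ))^2 + 1/((p.1:ℝ)+(n:ℝ))^2))
      = ENNReal.ofReal 16 * ∑' p : {p : ℤ // p ≠ n ∧ p ≠ -n},
          (ENNReal.ofReal (1/((p.1:ℝ)-(n:ℝ))^2) + ENNReal.ofReal (1/((p.1:ℝ)+(n:ℝ))^2)) := by
        rw [← ENNReal.tsum_mul_left]; exact tsum_congr hpt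
    _ ≤ ENNReal.ofReal 16 * (ENNReal.ofReal 6 + ENNReal.ofReal 6) := by
        apply mul_le_mul_right ?_
        rw [ENNReal.tsum_add]
        apply add_le_add
        · calc ∑' p : {p : ℤ // p ≠ n ∧ p ≠ -n}, ENNReal.ofReal (1/((p.1:ℝ)-(n:ℝ))^2)
              ≤ ∑' p : ℤ, ENNReal.ofReal (1/((p:ℝ)-(n:ℝ))^2) :=
                ENNReal.tsum_comp_le_tsum_of_injective Subtype.val_injective _
            _ ≤ ENNReal.ofReal 6 := ztrans2 n
        · calc ∑' p : {p : ℤ // p ≠ n ∧ p ≠ -n}, ENNReal.ofReal (1/((p.1:ℝ)+(n:ℝ))^2)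
              ≤ ∑' p : ℤ, ENNReal.ofReal (1/((p:ℝ)+(n:ℝ))^2) :=
                ENNReal.tsum_comp_le_tsum_of_injective Subtype.val_injective _
            _ ≤ ENNReal.ofReal 6 := by
                have h := ztrans2 (-n)
                calc ∑' p : ℤ, ENNReal.ofReal (1/((p:ℝ)+(n:ℝ))^2)
                    = ∑' p : ℤ, ENNReal.ofReal (1/((p:ℝ)-((-n : ℤ):ℝ))^2) := by
                      refine tsum_congr (fun p => ?_); congr 2; push_cast; ring
                  _ ≤ _ := h
    _ = ENNReal.ofReal 192 := by
        rw [← ENNReal.ofReal_add (by norm_num) (by norm_num), ← ENNReal.ofReal_mul (by norm_num)]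
        norm_num

lemma ksum_le (n : ℤ) :
    ∑' k : {k : ℤ // k ≠ n ∧ k ≠ -n},
      ENNReal.ofReal (12*(1/|(k.1:ℝ)-(n:ℝ)|^3 + 1/|(k.1:ℝ)+(n:ℝ)|^3))
      ≤ ENNReal.ofReal 144 := by
  have hpt : ∀ k : {k : ℤ // k ≠ n ∧ k ≠ -n},
      ENNReal.ofReal (12*(1/|(k.1:ℝ)-(n:ℝ)|^3 + 1/|(k.1:ℝ)+(n:ℝ)|^3))
      = ENNReal.ofReal 12 *
        (ENNReal.ofReal (1/|(k.1:ℝ)-(n:ℝ)|^3) + ENNReal.ofReal (1/|(k.1:ℝ)+(n:ℝ)|^3)) := by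
    intro k
    rw [ENNReal.ofReal_mul (by norm_num), ENNReal.ofReal_add (by positivity) (by positivity)]
  calc ∑' k : {k : ℤ // k ≠ n ∧ k ≠ -n},
        ENNReal.ofReal (12*(1/|(k.1:ℝ)-(n:ℝ)|^3 + 1/|(k.1:ℝ)+(n:ℝ)|^3))
      = ENNReal.ofReal 12 * ∑' k : {k : ℤ // k ≠ n ∧ k ≠ -n},
          (ENNReal.ofReal (1/|(k.1:ℝ)-(n:ℝ)|^3) + ENNReal.ofReal (1/|(k.1:ℝ)+(n:ℝ)|^3)) := by
        rw [← ENNReal.tsum_mul_left]; exact tsum_congr hpt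
    _ ≤ ENNReal.ofReal 12 * (ENNReal.ofReal 6 + ENNReal.ofReal 6) := by
        apply mul_le_mul_right ?_
        rw [ENNReal.tsum_add]
        apply add_le_add
        · calc ∑' k : {k : ℤ // k ≠ n ∧ k ≠ -n}, ENNReal.ofReal (1/|(k.1:ℝ)-(n:ℝ)|^3)
              ≤ ∑' k : ℤ, ENNReal.ofReal (1/|(k:ℝ)-(n:ℝ)|^3) :=
                ENNReal.tsum_comp_le_tsum_of_injective Subtype.val_injective _
            _ ≤ ENNReal.ofReal 6 := ztrans3 n
        · calc ∑' k : {k : ℤ // k ≠ n ∧ k ≠ -n}, ENNReal.ofReal (1/|(k.1:ℝ)+(n:ℝ)|^3)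
              ≤ ∑' k : ℤ, ENNReal.ofReal (1/|(k:ℝ)+(n:ℝ)|^3) :=
                ENNReal.tsum_comp_le_tsum_of_injective Subtype.val_injective _
            _ ≤ ENNReal.ofReal 6 := by
                have h := ztrans3 (-n)
                calc ∑' k : ℤ, ENNReal.ofReal (1/|(k:ℝ)+(n:ℝ)|^3)
                    = ∑' k : ℤ, ENNReal.ofReal (1/|(k:ℝ)-((-n : ℤ):ℝ)|^3) := by
                      refine tsum_congr (fun k => ?_); congr 3; push_cast; ring
                  _ ≤ _ := h
    _ = ENNReal.ofReal 144 := by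
        rw [← ENNReal.ofReal_add (by norm_num) (by norm_num), ← ENNReal.ofReal_mul (by norm_num)]
        norm_num

lemma per_n (r : ℤ → ℝ) (n : ℤ) (hn : 2 ≤ n) :
    ∑' p : {p : ℤ // p ≠ n ∧ p ≠ -n},
      ENNReal.ofReal (((n : ℝ) / ((n : ℝ) ^ 2 - (p.1 : ℝ) ^ 2) ^ 2) * (r (2 * n)) ^ 2) *
      ∑' k : {k : ℤ // k ≠ n ∧ k ≠ -n},
        ENNReal.ofReal ((((k.1 : ℝ) + (p.1 : ℝ)) ^ 2 / |(n : ℝ) ^ 2 - (k.1 : ℝ) ^ 2|) *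
          (r (k.1 + p.1)) ^ 2)
    ≤ ENNReal.ofReal ((r (2 * n))^2) * (ENNReal.ofReal 336 * l2norm2 r) := by
  set S := l2norm2 r with hS
  set R2 := (r (2 * n))^2 with hR2
  have hR2nn : 0 ≤ R2 := sq_nonneg _
  -- notation
  set X : ℤ → ℝ := fun p => 16*(1/((p:ℝ)-(n:ℝ))^2 + 1/((p:ℝ)+(n:ℝ))^2) with hX
  set Y : ℤ → ℝ := fun k => 12*(1/|(k:ℝ)-(n:ℝ)|^3 + 1/|(k:ℝ)+(n:ℝ)|^3) with hY
  have hXnn : ∀ p, 0 ≤ X p := fun p => by rw [hX]; positivity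
  have hYnn : ∀ k, 0 ≤ Y k := fun k => by rw [hY]; positivity
  -- step 1: bound each p-term
  have step1 : ∀ p : {p : ℤ // p ≠ n ∧ p ≠ -n},
      ENNReal.ofReal (((n : ℝ) / ((n : ℝ) ^ 2 - (p.1 : ℝ) ^ 2) ^ 2) * R2) *
      ∑' k : {k : ℤ // k ≠ n ∧ k ≠ -n},
        ENNReal.ofReal ((((k.1 : ℝ) + (p.1 : ℝ)) ^ 2 / |(n : ℝ) ^ 2 - (k.1 : ℝ) ^ 2|) *
          (r (k.1 + p.1)) ^ 2)
      ≤ ENNReal.ofReal R2 *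
        ∑' k : {k : ℤ // k ≠ n ∧ k ≠ -n},
          (ENNReal.ofReal (X p.1 * (r (k.1 + p.1))^2) + ENNReal.ofReal (Y k.1 * (r (k.1 + p.1))^2)) := by
    intro p
    have hcnn : 0 ≤ (n : ℝ) / ((n : ℝ) ^ 2 - (p.1 : ℝ) ^ 2) ^ 2 := by
      apply div_nonneg _ (by positivity)
      exact_mod_cast (by omega : (0:ℤ) ≤ n)
    rw [ENNReal.ofReal_mul hcnn, mul_comm (ENNReal.ofReal _) (ENNReal.ofReal R2), mul_assoc,
      ← ENNReal.tsum_mul_left]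
    apply mul_le_mul_right
    apply ENNReal.tsum_le_tsum
    intro k
    rw [← ENNReal.ofReal_mul hcnn]
    have hb : ((n : ℝ) / ((n : ℝ) ^ 2 - (p.1 : ℝ) ^ 2) ^ 2) *
        ((((k.1 : ℝ) + (p.1 : ℝ)) ^ 2 / |(n : ℝ) ^ 2 - (k.1 : ℝ) ^ 2|) * (r (k.1 + p.1)) ^ 2)
        ≤ (X p.1 + Y k.1) * (r (k.1 + p.1))^2 := by
      have hkey := key_pt n p.1 k.1 hn p.2.1 p.2.2 k.2.1 k.2.2
      have := mul_le_mul_of_nonneg_right hkey (sq_nonneg (r (k.1 + p.1)))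
      calc ((n : ℝ) / ((n : ℝ) ^ 2 - (p.1 : ℝ) ^ 2) ^ 2) *
          ((((k.1 : ℝ) + (p.1 : ℝ)) ^ 2 / |(n : ℝ) ^ 2 - (k.1 : ℝ) ^ 2|) * (r (k.1 + p.1)) ^ 2)
          = (((n:ℝ)/((n:ℝ)^2-(p.1:ℝ)^2)^2) * (((k.1:ℝ)+(p.1:ℝ))^2/|(n:ℝ)^2-(k.1:ℝ)^2|)) *
            (r (k.1 + p.1))^2 := by ring
        _ ≤ (X p.1 + Y k.1) * (r (k.1 + p.1))^2 := this
    calc ENNReal.ofReal (((n : ℝ) / ((n : ℝ) ^ 2 - (p.1 : ℝ) ^ 2) ^ 2) *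
          ((((k.1 : ℝ) + (p.1 : ℝ)) ^ 2 / |(n : ℝ) ^ 2 - (k.1 : ℝ) ^ 2|) * (r (k.1 + p.1)) ^ 2))
        ≤ ENNReal.ofReal ((X p.1 + Y k.1) * (r (k.1 + p.1))^2) := ENNReal.ofReal_le_ofReal hb
      _ = ENNReal.ofReal (X p.1 * (r (k.1 + p.1))^2) + ENNReal.ofReal (Y k.1 * (r (k.1 + p.1))^2) := by
          rw [add_mul, ENNReal.ofReal_add (by positivity) (by positivity)]
  -- step 2: sum over p
  calc ∑' p : {p : ℤ // p ≠ n ∧ p ≠ -n},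
        ENNReal.ofReal (((n : ℝ) / ((n : ℝ) ^ 2 - (p.1 : ℝ) ^ 2) ^ 2) * R2) *
        ∑' k : {k : ℤ // k ≠ n ∧ k ≠ -n},
          ENNReal.ofReal ((((k.1 : ℝ) + (p.1 : ℝ)) ^ 2 / |(n : ℝ) ^ 2 - (k.1 : ℝ) ^ 2|) *
            (r (k.1 + p.1)) ^ 2)
      ≤ ∑' p : {p : ℤ // p ≠ n ∧ p ≠ -n}, ENNReal.ofReal R2 *
          ∑' k : {k : ℤ // k ≠ n ∧ k ≠ -n},
            (ENNReal.ofReal (X p.1 * (r (k.1 + p.1))^2) + ENNReal.ofReal (Y k.1 * (r (k.1 + p.1))^2)) :=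
        ENNReal.tsum_le_tsum step1
    _ = ENNReal.ofReal R2 * ∑' p : {p : ℤ // p ≠ n ∧ p ≠ -n},
          ∑' k : {k : ℤ // k ≠ n ∧ k ≠ -n},
            (ENNReal.ofReal (X p.1 * (r (k.1 + p.1))^2) + ENNReal.ofReal (Y k.1 * (r (k.1 + p.1))^2)) :=
        ENNReal.tsum_mul_left
    _ ≤ ENNReal.ofReal R2 * (ENNReal.ofReal 336 * S) := by
        apply mul_le_mul_right
        -- split the double sum
        have hsplit : ∑' p : {p : ℤ // p ≠ n ∧ p ≠ -n},
            ∑' k : {k : ℤ // k ≠ n ∧ k ≠ -n},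
              (ENNReal.ofReal (X p.1 * (r (k.1 + p.1))^2) + ENNReal.ofReal (Y k.1 * (r (k.1 + p.1))^2))
            = (∑' p : {p : ℤ // p ≠ n ∧ p ≠ -n}, ∑' k : {k : ℤ // k ≠ n ∧ k ≠ -n},
                ENNReal.ofReal (X p.1 * (r (k.1 + p.1))^2))
              + ∑' p : {p : ℤ // p ≠ n ∧ p ≠ -n}, ∑' k : {k : ℤ // k ≠ n ∧ k ≠ -n},
                ENNReal.ofReal (Y k.1 * (r (k.1 + p.1))^2) := by
          rw [← ENNReal.tsum_add]
          refine tsum_congr (fun p => ?_)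
          rw [← ENNReal.tsum_add]
        rw [hsplit]
        have hD1 : ∑' p : {p : ℤ // p ≠ n ∧ p ≠ -n}, ∑' k : {k : ℤ // k ≠ n ∧ k ≠ -n},
            ENNReal.ofReal (X p.1 * (r (k.1 + p.1))^2) ≤ ENNReal.ofReal 192 * S := by
          have heach : ∀ p : {p : ℤ // p ≠ n ∧ p ≠ -n},
              ∑' k : {k : ℤ // k ≠ n ∧ k ≠ -n}, ENNReal.ofReal (X p.1 * (r (k.1 + p.1))^2)
              ≤ ENNReal.ofReal (X p.1) * S := by
            intro p
            calc ∑' k : {k : ℤ // k ≠ n ∧ k ≠ -n}, ENNReal.ofReal (X p.1 * (r (k.1 + p.1))^2)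
                = ENNReal.ofReal (X p.1) *
                  ∑' k : {k : ℤ // k ≠ n ∧ k ≠ -n}, ENNReal.ofReal ((r (k.1 + p.1))^2) := by
                  rw [← ENNReal.tsum_mul_left]
                  exact tsum_congr (fun k => ENNReal.ofReal_mul (hXnn p.1))
              _ ≤ ENNReal.ofReal (X p.1) * S := mul_le_mul_right (subSum_le r n p.1) _
          calc ∑' p : {p : ℤ // p ≠ n ∧ p ≠ -n}, ∑' k : {k : ℤ // k ≠ n ∧ k ≠ -n},
              ENNReal.ofReal (X p.1 * (r (k.1 + p.1))^2)
              ≤ ∑' p : {p : ℤ // p ≠ n ∧ p ≠ -n}, ENNReal.ofReal (X p.1) * S :=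
                ENNReal.tsum_le_tsum heach
            _ = (∑' p : {p : ℤ // p ≠ n ∧ p ≠ -n}, ENNReal.ofReal (X p.1)) * S :=
                ENNReal.tsum_mul_right
            _ ≤ ENNReal.ofReal 192 * S := mul_le_mul_left (psum_le n) _
        have hD2 : ∑' p : {p : ℤ // p ≠ n ∧ p ≠ -n}, ∑' k : {k : ℤ // k ≠ n ∧ k ≠ -n},
            ENNReal.ofReal (Y k.1 * (r (k.1 + p.1))^2) ≤ ENNReal.ofReal 144 * S := by
          rw [ENNReal.tsum_comm]
          have heach : ∀ k : {k : ℤ // k ≠ n ∧ k ≠ -n},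
              ∑' p : {p : ℤ // p ≠ n ∧ p ≠ -n}, ENNReal.ofReal (Y k.1 * (r (k.1 + p.1))^2)
              ≤ ENNReal.ofReal (Y k.1) * S := by
            intro k
            calc ∑' p : {p : ℤ // p ≠ n ∧ p ≠ -n}, ENNReal.ofReal (Y k.1 * (r (k.1 + p.1))^2)
                = ENNReal.ofReal (Y k.1) *
                  ∑' p : {p : ℤ // p ≠ n ∧ p ≠ -n}, ENNReal.ofReal ((r (p.1 + k.1))^2) := by
                  rw [← ENNReal.tsum_mul_left]
                  refine tsum_congr (fun p => ?_)
                  rw [add_comm (k.1) (p.1), ENNReal.ofReal_mul (hYnn k.1)]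
              _ ≤ ENNReal.ofReal (Y k.1) * S := mul_le_mul_right (subSum_le r n k.1) _
          calc ∑' k : {k : ℤ // k ≠ n ∧ k ≠ -n}, ∑' p : {p : ℤ // p ≠ n ∧ p ≠ -n},
              ENNReal.ofReal (Y k.1 * (r (k.1 + p.1))^2)
              ≤ ∑' k : {k : ℤ // k ≠ n ∧ k ≠ -n}, ENNReal.ofReal (Y k.1) * S :=
                ENNReal.tsum_le_tsum heach
            _ = (∑' k : {k : ℤ // k ≠ n ∧ k ≠ -n}, ENNReal.ofReal (Y k.1)) * S :=
                ENNReal.tsum_mul_right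
            _ ≤ ENNReal.ofReal 144 * S := mul_le_mul_left (ksum_le n) _
        calc _ ≤ ENNReal.ofReal 192 * S + ENNReal.ofReal 144 * S := add_le_add hD1 hD2
          _ = ENNReal.ofReal 336 * S := by
              rw [← add_mul, ← ENNReal.ofReal_add (by norm_num) (by norm_num)]
              norm_num

lemma tail_le (r : ℤ → ℝ) (N : ℕ) (hN : 1 ≤ N) :
    ∑' n : {n : ℤ // (N : ℤ) < n}, ENNReal.ofReal ((r (2 * n.1))^2) ≤ tailNorm2 r N := by
  have hmem : ∀ n : {n : ℤ // (N : ℤ) < n}, (N : ℤ) ≤ |2 * n.1| := by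
    intro n
    have h1 : (N : ℤ) < n.1 := n.2
    rw [abs_of_nonneg (by omega)]
    omega
  let f : {n : ℤ // (N : ℤ) < n} → {k : ℤ // (N : ℤ) ≤ |k|} := fun n => ⟨2 * n.1, hmem n⟩
  have hinj : Function.Injective f := by
    intro a b hab
    have : (2 : ℤ) * a.1 = 2 * b.1 := congrArg Subtype.val hab
    exact Subtype.ext (by omega)
  exact ENNReal.tsum_comp_le_tsum_of_injective hinj
    (fun k : {k : ℤ // (N : ℤ) ≤ |k|} => ENNReal.ofReal ((r k.1)^2))

/-- There is an absolute constant `C` such that for every nonnegative `r ∈ ℓ²(ℤ)` and `N ≥ 1`: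
`Σ_{n>N} Σ_{p≠±n} (n/(n²-p²)²) r(2n)² Σ_{k≠±n} ((k+p)²/|n²-k²|) r(k+p)² ≤ C ‖r‖² E_N(r)²`. -/
theorem stmt8 : ∃ C : ℝ, 0 < C ∧ ∀ r : ℤ → ℝ, (∀ k, 0 ≤ r k) →
    Summable (fun k => (r k) ^ 2) → ∀ N : ℕ, 1 ≤ N →
    ∑' n : {n : ℤ // (N : ℤ) < n}, ∑' p : {p : ℤ // p ≠ n.1 ∧ p ≠ -n.1},
      ENNReal.ofReal (((n.1 : ℝ) / ((n.1 : ℝ) ^ 2 - (p.1 : ℝ) ^ 2) ^ 2) * (r (2 * n.1)) ^ 2) *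
      ∑' k : {k : ℤ // k ≠ n.1 ∧ k ≠ -n.1},
        ENNReal.ofReal ((((k.1 : ℝ) + (p.1 : ℝ)) ^ 2 / |(n.1 : ℝ) ^ 2 - (k.1 : ℝ) ^ 2|) *
          (r (k.1 + p.1)) ^ 2)
    ≤ ENNReal.ofReal C * l2norm2 r * tailNorm2 r N := by
  refine ⟨336, by norm_num, ?_⟩
  intro r _ _ N hN
  calc ∑' n : {n : ℤ // (N : ℤ) < n}, ∑' p : {p : ℤ // p ≠ n.1 ∧ p ≠ -n.1},
      ENNReal.ofReal (((n.1 : ℝ) / ((n.1 : ℝ) ^ 2 - (p.1 : ℝ) ^ 2) ^ 2) * (r (2 * n.1)) ^ 2) *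
      ∑' k : {k : ℤ // k ≠ n.1 ∧ k ≠ -n.1},
        ENNReal.ofReal ((((k.1 : ℝ) + (p.1 : ℝ)) ^ 2 / |(n.1 : ℝ) ^ 2 - (k.1 : ℝ) ^ 2|) *
          (r (k.1 + p.1)) ^ 2)
      ≤ ∑' n : {n : ℤ // (N : ℤ) < n},
          ENNReal.ofReal ((r (2 * n.1))^2) * (ENNReal.ofReal 336 * l2norm2 r) := by
        apply ENNReal.tsum_le_tsum
        intro n
        exact per_n r n.1 (by have := n.2; omega)
    _ = (∑' n : {n : ℤ // (N : ℤ) < n}, ENNReal.ofReal ((r (2 * n.1))^2)) *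
          (ENNReal.ofReal 336 * l2norm2 r) := ENNReal.tsum_mul_right
    _ ≤ tailNorm2 r N * (ENNReal.ofReal 336 * l2norm2 r) :=
        mul_le_mul_left (tail_le r N hN) _
    _ = ENNReal.ofReal 336 * l2norm2 r * tailNorm2 r N := by ring
end

section
/- There is an absolute constant C such that for every nonnegative even sequence r ∈ ℓ²(ℤ) and every N ≥ 1: Σ_{n>N} Σ_{i≠±n} r(n-i)²/(n+i)² ≤ C·(‖r‖²/N + E_N(r)²). -/
open scoped ENNReal

lemma tail_sq_inv_sum (N : ℕ) (hN : 1 ≤ N) :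
    ∑' k : ℕ, (if N ≤ k then ENNReal.ofReal (((k : ℝ) ^ 2)⁻¹) else 0)
      ≤ ENNReal.ofReal (2 / N) := by
  classical
  rw [ENNReal.tsum_eq_iSup_sum]
  apply iSup_le
  intro s
  have h1 : ∑ k ∈ s, (if N ≤ k then ENNReal.ofReal (((k : ℝ) ^ 2)⁻¹) else 0)
      = ∑ k ∈ s.filter (fun k => N ≤ k), ENNReal.ofReal (((k : ℝ) ^ 2)⁻¹) := by
    rw [Finset.sum_filter]
  rw [h1, ← ENNReal.ofReal_sum_of_nonneg (fun i _ => by positivity)]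
  apply ENNReal.ofReal_le_ofReal
  set t := s.filter (fun k => N ≤ k) with ht
  have hsub : t ⊆ Finset.Ioo (N - 1) (t.sup id + 1) := by
    intro k hk
    have hk2 := hk
    simp only [ht, Finset.mem_filter] at hk2
    have : k ≤ t.sup id := Finset.le_sup (f := id) hk
    rw [Finset.mem_Ioo]
    omega
  calc ∑ k ∈ t, ((k : ℝ) ^ 2)⁻¹
      ≤ ∑ k ∈ Finset.Ioo (N - 1) (t.sup id + 1), ((k : ℝ) ^ 2)⁻¹ :=
        Finset.sum_le_sum_of_subset_of_nonneg hsub (fun i _ _ => by positivity)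
    _ ≤ 2 / (((N - 1 : ℕ) : ℝ) + 1) := sum_Ioo_inv_sq_le _ _
    _ = 2 / (N : ℝ) := by
        congr 1
        have : ((N - 1 : ℕ) : ℝ) = (N : ℝ) - 1 := by
          push_cast [Nat.cast_sub hN]; ring
        rw [this]; ring

lemma full_sq_inv_sum :
    ∑' k : ℕ, ENNReal.ofReal (((k : ℝ) ^ 2)⁻¹) ≤ ENNReal.ofReal 2 := by
  have h : ∀ k : ℕ, ENNReal.ofReal (((k : ℝ) ^ 2)⁻¹)
      = if 1 ≤ k then ENNReal.ofReal (((k : ℝ) ^ 2)⁻¹) else 0 := by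
    intro k
    split
    · rfl
    · have : k = 0 := by omega
      subst this; simp
  calc ∑' k : ℕ, ENNReal.ofReal (((k : ℝ) ^ 2)⁻¹)
      = ∑' k : ℕ, (if 1 ≤ k then ENNReal.ofReal (((k : ℝ) ^ 2)⁻¹) else 0) :=
        tsum_congr h
    _ ≤ ENNReal.ofReal (2 / (1 : ℕ)) := tail_sq_inv_sum 1 le_rfl
    _ = ENNReal.ofReal 2 := by norm_num

lemma int_full_sum :
    ∑' m : ℤ, ENNReal.ofReal (((m : ℝ) ^ 2)⁻¹) ≤ ENNReal.ofReal 4 := by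
  rw [tsum_of_nat_of_neg_add_one ENNReal.summable ENNReal.summable]
  have h1 : ∑' n : ℕ, ENNReal.ofReal ((((n : ℤ) : ℝ) ^ 2)⁻¹) ≤ ENNReal.ofReal 2 := by
    simpa using full_sq_inv_sum
  have h2 : ∑' n : ℕ, ENNReal.ofReal (((((-((n : ℤ) + 1)) : ℤ) : ℝ) ^ 2)⁻¹) ≤ ENNReal.ofReal 2 := by
    have he : ∀ n : ℕ, ENNReal.ofReal (((((-((n : ℤ) + 1)) : ℤ) : ℝ) ^ 2)⁻¹)
        = ENNReal.ofReal ((((n + 1 : ℕ) : ℝ) ^ 2)⁻¹) := by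
      intro n; congr 2; push_cast; ring
    calc ∑' n : ℕ, ENNReal.ofReal (((((-((n : ℤ) + 1)) : ℤ) : ℝ) ^ 2)⁻¹)
        = ∑' n : ℕ, ENNReal.ofReal ((((n + 1 : ℕ) : ℝ) ^ 2)⁻¹) := tsum_congr he
      _ ≤ ∑' k : ℕ, ENNReal.ofReal (((k : ℝ) ^ 2)⁻¹) :=
          ENNReal.tsum_comp_le_tsum_of_injective (fun a b h => by omega) _
      _ ≤ ENNReal.ofReal 2 := full_sq_inv_sum
  calc _ ≤ ENNReal.ofReal 2 + ENNReal.ofReal 2 := add_le_add h1 h2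
    _ = ENNReal.ofReal 4 := by rw [← ENNReal.ofReal_add] <;> norm_num

lemma int_tail_sum (N : ℕ) (hN : 1 ≤ N) :
    ∑' m : ℤ, (if (N : ℤ) ≤ |m| then ENNReal.ofReal (((m : ℝ) ^ 2)⁻¹) else 0)
      ≤ ENNReal.ofReal (4 / N) := by
  rw [tsum_of_nat_of_neg_add_one ENNReal.summable ENNReal.summable]
  have h1 : ∑' n : ℕ, (if (N : ℤ) ≤ |(n : ℤ)| then ENNReal.ofReal ((((n : ℤ) : ℝ) ^ 2)⁻¹) else 0)
      ≤ ENNReal.ofReal (2 / N) := by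
    have he : ∀ n : ℕ, (if (N : ℤ) ≤ |(n : ℤ)| then ENNReal.ofReal ((((n : ℤ) : ℝ) ^ 2)⁻¹) else 0)
        = (if N ≤ n then ENNReal.ofReal (((n : ℝ) ^ 2)⁻¹) else 0) := by
      intro n
      have hc : ((N : ℤ) ≤ |(n : ℤ)|) ↔ (N ≤ n) := by
        rw [Int.abs_natCast]; exact_mod_cast Iff.rfl
      simp only [hc, Int.cast_natCast]
    rw [tsum_congr he]
    exact tail_sq_inv_sum N hN
  have h2 : ∑' n : ℕ, (if (N : ℤ) ≤ |(-((n : ℤ) + 1))| then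
        ENNReal.ofReal (((((-((n : ℤ) + 1)) : ℤ) : ℝ) ^ 2)⁻¹) else 0)
      ≤ ENNReal.ofReal (2 / N) := by
    have he : ∀ n : ℕ, (if (N : ℤ) ≤ |(-((n : ℤ) + 1))| then
          ENNReal.ofReal (((((-((n : ℤ) + 1)) : ℤ) : ℝ) ^ 2)⁻¹) else 0)
        = (if N ≤ n + 1 then ENNReal.ofReal ((((n + 1 : ℕ) : ℝ) ^ 2)⁻¹) else 0) := by
      intro n
      have hc : ((N : ℤ) ≤ |(-((n : ℤ) + 1))|) ↔ (N ≤ n + 1) := by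
        rw [abs_neg]
        rw [abs_of_nonneg (by positivity)]
        constructor <;> intro h <;> omega
      have hv : ENNReal.ofReal (((((-((n : ℤ) + 1)) : ℤ) : ℝ) ^ 2)⁻¹)
          = ENNReal.ofReal ((((n + 1 : ℕ) : ℝ) ^ 2)⁻¹) := by
        congr 2; push_cast; ring
      simp only [hc, hv]
    rw [tsum_congr he]
    calc ∑' n : ℕ, (if N ≤ n + 1 then ENNReal.ofReal ((((n + 1 : ℕ) : ℝ) ^ 2)⁻¹) else 0)
        ≤ ∑' k : ℕ, (if N ≤ k then ENNReal.ofReal (((k : ℝ) ^ 2)⁻¹) else 0) :=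
          ENNReal.tsum_comp_le_tsum_of_injective
            (f := fun n : ℕ => n + 1) (fun a b h => by simpa using h)
            (g := fun k => if N ≤ k then ENNReal.ofReal (((k : ℝ) ^ 2)⁻¹) else 0)
      _ ≤ ENNReal.ofReal (2 / N) := tail_sq_inv_sum N hN
  calc _ ≤ ENNReal.ofReal (2 / N) + ENNReal.ofReal (2 / N) := add_le_add h1 h2
    _ = ENNReal.ofReal (4 / N) := by
        rw [← ENNReal.ofReal_add (by positivity) (by positivity)]; ring_nf

/-- There is an absolute constant `C` such that for every nonnegative even `r ∈ ℓ²(ℤ)`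
and `N ≥ 1`: `Σ_{n>N} Σ_{i≠±n} r(n-i)²/(n+i)² ≤ C (‖r‖²/N + E_N(r)²)`. -/
theorem stmt11 : ∃ C : ℝ, 0 < C ∧ ∀ r : ℤ → ℝ, (∀ k, r (-k) = r k) → (∀ k, 0 ≤ r k) →
    Summable (fun k => (r k) ^ 2) → ∀ N : ℕ, 1 ≤ N →
    ∑' n : {n : ℤ // (N : ℤ) < n}, ∑' i : {i : ℤ // i ≠ n.1 ∧ i ≠ -n.1},
      ENNReal.ofReal ((r (n.1 - i.1)) ^ 2 / ((n.1 : ℝ) + (i.1 : ℝ)) ^ 2)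
    ≤ ENNReal.ofReal C * (l2norm2 r / (N : ℝ≥0∞) + tailNorm2 r N) := by
  classical
  refine ⟨4, by norm_num, ?_⟩
  intro r hev hpos hsum N hN
  -- Step 1: bound the inner sum for each n
  have step1 : ∀ n : {n : ℤ // (N : ℤ) < n},
      (∑' i : {i : ℤ // i ≠ n.1 ∧ i ≠ -n.1},
        ENNReal.ofReal ((r (n.1 - i.1)) ^ 2 / ((n.1 : ℝ) + (i.1 : ℝ)) ^ 2))
      ≤ ∑' m : ℤ, ENNReal.ofReal ((r (2 * n.1 - m)) ^ 2)
          * ENNReal.ofReal ((((m : ℤ) : ℝ) ^ 2)⁻¹) := by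
    intro n
    have h1 : (∑' i : {i : ℤ // i ≠ n.1 ∧ i ≠ -n.1},
        ENNReal.ofReal ((r (n.1 - i.1)) ^ 2 / ((n.1 : ℝ) + (i.1 : ℝ)) ^ 2))
        ≤ ∑' i : ℤ, ENNReal.ofReal ((r (n.1 - i)) ^ 2 / ((n.1 : ℝ) + (i : ℝ)) ^ 2) :=
      ENNReal.tsum_comp_le_tsum_of_injective Subtype.val_injective
        (fun i : ℤ => ENNReal.ofReal ((r (n.1 - i)) ^ 2 / ((n.1 : ℝ) + (i : ℝ)) ^ 2))
    have h2 : (∑' i : ℤ, ENNReal.ofReal ((r (n.1 - i)) ^ 2 / ((n.1 : ℝ) + (i : ℝ)) ^ 2))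
        = ∑' m : ℤ, ENNReal.ofReal ((r (2 * n.1 - m)) ^ 2)
          * ENNReal.ofReal ((((m : ℤ) : ℝ) ^ 2)⁻¹) := by
      have he := Equiv.tsum_eq (Equiv.addLeft (n.1 : ℤ))
        (fun m : ℤ => ENNReal.ofReal ((r (2 * n.1 - m)) ^ 2)
          * ENNReal.ofReal ((((m : ℤ) : ℝ) ^ 2)⁻¹))
      simp only [Equiv.coe_addLeft] at he
      rw [← he]
      refine tsum_congr (fun i => ?_)
      rw [show (2 * n.1 - (n.1 + i)) = n.1 - i from by ring,
        show (((n.1 + i : ℤ) : ℝ)) = (n.1 : ℝ) + (i : ℝ) from by push_cast; ring,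
        div_eq_mul_inv, ENNReal.ofReal_mul (sq_nonneg _)]
    exact h1.trans (le_of_eq h2)
  -- injectivity of n ↦ 2n - m
  have hSl2 : ∀ m : ℤ, (∑' n : {n : ℤ // (N : ℤ) < n},
      ENNReal.ofReal ((r (2 * n.1 - m)) ^ 2)) ≤ l2norm2 r := by
    intro m
    have hinj : Function.Injective
        (fun n : {n : ℤ // (N : ℤ) < n} => 2 * n.1 - m) := by
      intro a b h
      simp only at h
      exact Subtype.ext (by omega)
    exact ENNReal.tsum_comp_le_tsum_of_injective hinj
      (fun k : ℤ => ENNReal.ofReal ((r k) ^ 2))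
  have hStail : ∀ m : ℤ, |m| < (N : ℤ) → (∑' n : {n : ℤ // (N : ℤ) < n},
      ENNReal.ofReal ((r (2 * n.1 - m)) ^ 2)) ≤ tailNorm2 r N := by
    intro m hm
    obtain ⟨hm1, hm2⟩ := abs_lt.mp hm
    have hF : ∀ n : {n : ℤ // (N : ℤ) < n}, (N : ℤ) ≤ |2 * n.1 - m| := by
      intro n
      have hn := n.2
      rw [abs_of_nonneg (by omega)]
      omega
    have hinj : Function.Injective
        (fun n : {n : ℤ // (N : ℤ) < n} =>
          (⟨2 * n.1 - m, hF n⟩ : {k : ℤ // (N : ℤ) ≤ |k|})) := by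
      intro a b h
      have h2 : 2 * a.1 - m = 2 * b.1 - m := congrArg Subtype.val h
      exact Subtype.ext (by omega)
    exact ENNReal.tsum_comp_le_tsum_of_injective hinj
      (fun k : {k : ℤ // (N : ℤ) ≤ |k|} => ENNReal.ofReal ((r k.1) ^ 2))
  -- per-m bound
  have key : ∀ m : ℤ, (∑' n : {n : ℤ // (N : ℤ) < n},
      ENNReal.ofReal ((r (2 * n.1 - m)) ^ 2)) * ENNReal.ofReal ((((m : ℤ) : ℝ) ^ 2)⁻¹)
      ≤ tailNorm2 r N * ENNReal.ofReal ((((m : ℤ) : ℝ) ^ 2)⁻¹)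
        + l2norm2 r * (if (N : ℤ) ≤ |m| then ENNReal.ofReal ((((m : ℤ) : ℝ) ^ 2)⁻¹) else 0) := by
    intro m
    by_cases h : (N : ℤ) ≤ |m|
    · rw [if_pos h]
      calc _ ≤ l2norm2 r * ENNReal.ofReal ((((m : ℤ) : ℝ) ^ 2)⁻¹) :=
            mul_le_mul_left (hSl2 m) _
        _ ≤ _ := le_add_self
    · rw [if_neg h, mul_zero, add_zero]
      exact mul_le_mul_left (hStail m (by omega)) _
  -- assemble
  have hN0 : (0 : ℝ) < (N : ℝ) := by positivity
  calc ∑' n : {n : ℤ // (N : ℤ) < n}, ∑' i : {i : ℤ // i ≠ n.1 ∧ i ≠ -n.1},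
        ENNReal.ofReal ((r (n.1 - i.1)) ^ 2 / ((n.1 : ℝ) + (i.1 : ℝ)) ^ 2)
      ≤ ∑' n : {n : ℤ // (N : ℤ) < n}, ∑' m : ℤ,
          ENNReal.ofReal ((r (2 * n.1 - m)) ^ 2) * ENNReal.ofReal ((((m : ℤ) : ℝ) ^ 2)⁻¹) :=
        ENNReal.tsum_le_tsum step1
    _ = ∑' m : ℤ, ∑' n : {n : ℤ // (N : ℤ) < n},
          ENNReal.ofReal ((r (2 * n.1 - m)) ^ 2) * ENNReal.ofReal ((((m : ℤ) : ℝ) ^ 2)⁻¹) :=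
        ENNReal.tsum_comm
    _ = ∑' m : ℤ, (∑' n : {n : ℤ // (N : ℤ) < n},
          ENNReal.ofReal ((r (2 * n.1 - m)) ^ 2)) * ENNReal.ofReal ((((m : ℤ) : ℝ) ^ 2)⁻¹) :=
        tsum_congr (fun m => ENNReal.tsum_mul_right)
    _ ≤ ∑' m : ℤ, (tailNorm2 r N * ENNReal.ofReal ((((m : ℤ) : ℝ) ^ 2)⁻¹)
          + l2norm2 r * (if (N : ℤ) ≤ |m| then ENNReal.ofReal ((((m : ℤ) : ℝ) ^ 2)⁻¹) else 0)) :=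
        ENNReal.tsum_le_tsum key
    _ = tailNorm2 r N * (∑' m : ℤ, ENNReal.ofReal ((((m : ℤ) : ℝ) ^ 2)⁻¹))
          + l2norm2 r * (∑' m : ℤ, (if (N : ℤ) ≤ |m| then
              ENNReal.ofReal ((((m : ℤ) : ℝ) ^ 2)⁻¹) else 0)) := by
        rw [ENNReal.tsum_add, ENNReal.tsum_mul_left, ENNReal.tsum_mul_left]
    _ ≤ tailNorm2 r N * ENNReal.ofReal 4 + l2norm2 r * ENNReal.ofReal (4 / N) :=
        add_le_add (mul_le_mul_right int_full_sum _)
          (mul_le_mul_right (int_tail_sum N hN) _)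
    _ = ENNReal.ofReal 4 * (l2norm2 r / (N : ℝ≥0∞) + tailNorm2 r N) := by
        rw [show ENNReal.ofReal (4 / N) = ENNReal.ofReal 4 / (N : ℝ≥0∞) from by
          rw [ENNReal.ofReal_div_of_pos hN0, ENNReal.ofReal_natCast]]
        rw [mul_add, div_eq_mul_inv, div_eq_mul_inv]
        ring
end

section
/- Suppose r ∈ ℓ²(ℤ) is nonnegative. Then for N ≥ 2: Σ_{n>N} Σ_{p≠±n} r(n+p)²/(n-p)² ≤ C·(‖r‖²/N + E_N(r)²) for an absolute constant C, where the inner index p runs over integers of the same parity as n. -/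
open scoped ENNReal

/-!
The substitution `k = n + p`, `m = n - p` is injective, and since `m = 2n - k` with `n > N`,
every term has `|k| ≥ N` or `|m| > N`. So the term `r(k)² / m²` is at most
`r(k)² w_N(m) + 1_{|k| ≥ N} r(k)² w_0(m)`, where `w_N(m) = m⁻² 1_{|m| > N}` (`invSqTail N`)
has `∑ₘ w_N(m) ≤ 4 / (N + 1)` by comparison with a telescoping sum. Summing over `(k, m)` gives `C = 4`.
-/

noncomputable def invSqTail (N : ℕ) (m : ℤ) : ℝ≥0∞ :=
  if (N : ℤ) < |m| then ENNReal.ofReal ((m : ℝ) ^ 2)⁻¹ else 0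

lemma invSqTail_of_lt {N : ℕ} {m : ℤ} (h : (N : ℤ) < |m|) :
    invSqTail N m = ENNReal.ofReal ((m : ℝ) ^ 2)⁻¹ :=
  if_pos h

lemma tsum_nat_inv_sq_tail_le (N : ℕ) :
    ∑' m : ℕ, (if N < m then ENNReal.ofReal ((m : ℝ) ^ 2)⁻¹ else 0) ≤
      ENNReal.ofReal (2 / (N + 1)) := by
  refine ENNReal.tsum_le_of_sum_range_le fun n => ?_
  have hIoo : (Finset.range n).filter (N < ·) = Finset.Ioo N n := by
    ext m; simp [and_comm]
  rw [← Finset.sum_filter, hIoo, ← ENNReal.ofReal_sum_of_nonneg fun _ _ => by positivity]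
  exact ENNReal.ofReal_le_ofReal (sum_Ioo_inv_sq_le N n)

lemma tsum_invSqTail_le (N : ℕ) : ∑' m, invSqTail N m ≤ ENNReal.ofReal (4 / (N + 1)) := by
  set g : ℕ → ℝ≥0∞ := fun m => if N < m then ENNReal.ofReal ((m : ℝ) ^ 2)⁻¹ else 0
  have hpos : ∀ m : ℕ, invSqTail N m = g m := fun m => by
    simp [invSqTail, g]
  have hneg : ∀ m : ℕ, invSqTail N (-(m + 1)) = g (m + 1) := fun m => by
    simp only [invSqTail, g, abs_neg]
    push_cast
    rw [abs_of_nonneg (by positivity)]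
    congr 1
    · simp only [eq_iff_iff]; omega
    · ring_nf
  rw [tsum_of_nat_of_neg_add_one ENNReal.summable ENNReal.summable]
  simp only [hpos, hneg]
  calc ∑' m, g m + ∑' m, g (m + 1) ≤ ∑' m, g m + ∑' m, g m :=
        add_le_add le_rfl (ENNReal.tsum_comp_le_tsum_of_injective (add_left_injective 1) g)
    _ ≤ ENNReal.ofReal (2 / (N + 1)) + ENNReal.ofReal (2 / (N + 1)) := by
        gcongr <;> exact tsum_nat_inv_sq_tail_le N
    _ = ENNReal.ofReal (4 / (N + 1)) := by
        rw [← ENNReal.ofReal_add (by positivity) (by positivity)]; ring_nf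

noncomputable def tailWeight (r : ℤ → ℝ) (N : ℕ) : ℤ → ℝ≥0∞ :=
  {k : ℤ | (N : ℤ) ≤ |k|}.indicator fun k => ENNReal.ofReal (r k ^ 2)

lemma tsum_tailWeight (r : ℤ → ℝ) (N : ℕ) : ∑' k, tailWeight r N k = tailNorm2 r N :=
  (tsum_subtype _ _).symm

noncomputable def sqDivSqMajorant (r : ℤ → ℝ) (N : ℕ) (km : ℤ × ℤ) : ℝ≥0∞ :=
  ENNReal.ofReal (r km.1 ^ 2) * invSqTail N km.2 + tailWeight r N km.1 * invSqTail 0 km.2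

lemma tsum_sqDivSqMajorant_le (r : ℤ → ℝ) (N : ℕ) :
    ∑' km, sqDivSqMajorant r N km ≤
      l2norm2 r * ENNReal.ofReal (4 / (N + 1)) + tailNorm2 r N * 4 := by
  calc _ = ∑' k, (ENNReal.ofReal (r k ^ 2) * ∑' m, invSqTail N m +
          tailWeight r N k * ∑' m, invSqTail 0 m) := by
        rw [ENNReal.tsum_prod']
        simp only [sqDivSqMajorant, ENNReal.tsum_add, ENNReal.tsum_mul_left]
    _ = l2norm2 r * ∑' m, invSqTail N m + tailNorm2 r N * ∑' m, invSqTail 0 m := by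
        rw [ENNReal.tsum_add, ENNReal.tsum_mul_right, ENNReal.tsum_mul_right, tsum_tailWeight,
          l2norm2]
    _ ≤ _ := by
        gcongr
        · exact tsum_invSqTail_le N
        · simpa using tsum_invSqTail_le 0

lemma ofReal_sq_div_sq_le_sqDivSqMajorant (r : ℤ → ℝ) {N : ℕ} {n p : ℤ} (hn : (N : ℤ) < n)
    (hpn : p ≠ n) :
    ENNReal.ofReal (r (n + p) ^ 2 / ((n : ℝ) - p) ^ 2) ≤ sqDivSqMajorant r N (n + p, n - p) := by
  rw [sqDivSqMajorant, div_eq_mul_inv, ENNReal.ofReal_mul (sq_nonneg _)]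
  by_cases hk : (N : ℤ) ≤ |n + p|
  · have hm : ((0 : ℕ) : ℤ) < |n - p| := by simpa [sub_eq_zero] using hpn.symm
    rw [tailWeight, Set.indicator_of_mem (s := {k : ℤ | (N : ℤ) ≤ |k|}) hk, invSqTail_of_lt hm]
    push_cast
    exact le_add_self
  · have hm : (N : ℤ) < |n - p| := by
      rw [not_le, abs_lt] at hk
      exact lt_of_lt_of_le (by omega) (le_abs_self _)
    rw [invSqTail_of_lt hm]
    push_cast
    exact le_self_add

lemma tsum_tsum_le_tsum_prod_add_sub {P : ℤ → Prop} {Q : {n // P n} → ℤ → Prop}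
    {f : (n : {n // P n}) → {p // Q n p} → ℝ≥0∞} {G : ℤ × ℤ → ℝ≥0∞}
    (h : ∀ n p, f n p ≤ G (n.1 + p.1, n.1 - p.1)) :
    ∑' (n) (p), f n p ≤ ∑' km, G km := by
  have hinj : Function.Injective fun x : (Σ n : {n // P n}, {p // Q n p}) =>
      (x.1.1 + x.2.1, x.1.1 - x.2.1) := by
    rintro ⟨⟨n, _⟩, ⟨p, _⟩⟩ ⟨⟨n', _⟩, ⟨p', _⟩⟩ he
    obtain ⟨rfl, rfl⟩ : n = n' ∧ p = p' := by simp only [Prod.mk.injEq] at he; omega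
    rfl
  rw [← ENNReal.tsum_sigma' fun x : (Σ n : {n // P n}, {p // Q n p}) => f x.1 x.2]
  refine (ENNReal.tsum_le_tsum fun x => ?_).trans (ENNReal.tsum_comp_le_tsum_of_injective hinj G)
  exact h x.1 x.2

/-- There is an absolute constant `C` such that for every nonnegative `r ∈ ℓ²(ℤ)` and `N ≥ 2`:
`Σ_{n>N} Σ_{p≠±n, p ≡ n (2)} r(n+p)²/(n-p)² ≤ C (‖r‖²/N + E_N(r)²)`. -/
theorem stmt16 : ∃ C : ℝ, 0 < C ∧ ∀ r : ℤ → ℝ, (∀ k, 0 ≤ r k) →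
    Summable (fun k => (r k) ^ 2) → ∀ N : ℕ, 2 ≤ N →
    ∑' n : {n : ℤ // (N : ℤ) < n},
      ∑' p : {p : ℤ // p ≠ n.1 ∧ p ≠ -n.1 ∧ (n.1 - p) % 2 = 0},
      ENNReal.ofReal ((r (n.1 + p.1)) ^ 2 / ((n.1 : ℝ) - (p.1 : ℝ)) ^ 2)
    ≤ ENNReal.ofReal C * (l2norm2 r / (N : ℝ≥0∞) + tailNorm2 r N) := by
  refine ⟨4, by norm_num, fun r _ _ N _ => ?_⟩
  have hweight : ENNReal.ofReal (4 / (N + 1)) ≤ 4 / N := by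
    rw [ENNReal.ofReal_div_of_pos (by positivity)]
    norm_cast
    exact ENNReal.div_le_div_left (by simp) _
  refine le_trans (tsum_tsum_le_tsum_prod_add_sub (G := sqDivSqMajorant r N) fun n p => ?_) ?_
  · exact ofReal_sq_div_sq_le_sqDivSqMajorant r n.2 p.2.1
  calc _ ≤ l2norm2 r * ENNReal.ofReal (4 / (N + 1)) + tailNorm2 r N * 4 :=
        tsum_sqDivSqMajorant_le r N
    _ ≤ l2norm2 r * (4 / N) + tailNorm2 r N * 4 := by gcongr
    _ = ENNReal.ofReal 4 * (l2norm2 r / N + tailNorm2 r N) := by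
        rw [ENNReal.ofReal_ofNat, mul_add, mul_div_assoc', mul_comm (l2norm2 r), ← mul_div_assoc',
          mul_comm (tailNorm2 r N)]
end

section
/- Let V(m) = m·q(m) for a sequence q ∈ ℓ²(2ℤ) (so |V(m)| ≤ |m|·r(m) with r(m) = max(|q(m)|,|q(-m)|)). Then for an absolute constant C and all N large enough: Σ_{n>N} Σ_{p≠±n} |V(p-n)|²/(n²-p²)² ≤ C·(‖r‖²/N + E_N(r)²). -/
open scoped ENNReal

/-- The even majorant `r(m) = max(|q(m)|, |q(-m)|)` of a sequence `q`. -/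
noncomputable def rseq (q : ℤ → ℂ) : ℤ → ℝ := fun m => max ‖q m‖ ‖q (-m)‖

/-- Weight `1/k²` for nonzero `k`, and `0` at `k = 0`. -/
noncomputable def wE : ℤ → ℝ≥0∞ := fun k =>
  if k = 0 then 0 else ENNReal.ofReal (((k : ℝ) ^ 2)⁻¹)

lemma fin_telescope (M : ℕ) (hM : 1 ≤ M) (n : ℕ) :
    ∑ j ∈ Finset.range n, (((M + j : ℕ) : ℝ) ^ 2)⁻¹ ≤ 2 / (M : ℝ) - 2 / ((M : ℝ) + n) := by
  induction n with
  | zero => simp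
  | succ n ih =>
    rw [Finset.sum_range_succ]
    have hk1 : (1 : ℝ) ≤ ((M + n : ℕ) : ℝ) := by exact_mod_cast Nat.le_add_right _ n |>.trans' hM
    set k : ℝ := ((M + n : ℕ) : ℝ) with hkdef
    have hk0 : (0 : ℝ) < k := lt_of_lt_of_le one_pos hk1
    have key : (k ^ 2)⁻¹ ≤ 2 / k - 2 / (k + 1) := by
      have h1 : 2 / k - 2 / (k + 1) = 2 / (k * (k + 1)) := by
        field_simp
        ring
      rw [h1, inv_eq_one_div, div_le_div_iff₀ (by positivity) (by positivity)]
      nlinarith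
    have hcastk : k = (M : ℝ) + n := by push_cast [hkdef]; ring
    have hcast2 : ((M : ℝ) + (n + 1 : ℕ)) = k + 1 := by rw [hcastk]; push_cast; ring
    rw [hcast2]
    calc (∑ j ∈ Finset.range n, (((M + j : ℕ) : ℝ) ^ 2)⁻¹) + ((k : ℝ) ^ 2)⁻¹
        ≤ (2 / (M : ℝ) - 2 / ((M : ℝ) + n)) + (2 / k - 2 / (k + 1)) := add_le_add ih key
      _ = 2 / (M : ℝ) - 2 / (k + 1) := by rw [← hcastk]; ring

lemma fin_telescope' (M : ℕ) (hM : 1 ≤ M) (n : ℕ) :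
    ∑ j ∈ Finset.range n, (((M + j : ℕ) : ℝ) ^ 2)⁻¹ ≤ 2 / (M : ℝ) := by
  refine (fin_telescope M hM n).trans ?_
  have hM0 : (0 : ℝ) < (M : ℝ) := by exact_mod_cast hM
  have : (0 : ℝ) ≤ 2 / ((M : ℝ) + n) := by positivity
  linarith

lemma tailNat (M : ℕ) (hM : 1 ≤ M) :
    ∑' j : ℕ, ENNReal.ofReal ((((M + j : ℕ) : ℝ) ^ 2)⁻¹) ≤ ENNReal.ofReal (2 / (M : ℝ)) := by
  rw [ENNReal.tsum_eq_iSup_sum]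
  refine iSup_le fun s => ?_
  obtain ⟨n, hn⟩ := s.exists_nat_subset_range
  calc ∑ j ∈ s, ENNReal.ofReal ((((M + j : ℕ) : ℝ) ^ 2)⁻¹)
      = ENNReal.ofReal (∑ j ∈ s, (((M + j : ℕ) : ℝ) ^ 2)⁻¹) :=
        (ENNReal.ofReal_sum_of_nonneg fun j _ => by positivity).symm
    _ ≤ ENNReal.ofReal (2 / (M : ℝ)) := by
        refine ENNReal.ofReal_le_ofReal ?_
        refine le_trans (Finset.sum_le_sum_of_subset_of_nonneg hn fun j _ _ => by positivity) ?_
        exact fin_telescope' M hM n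

set_option maxHeartbeats 800000 in
lemma wE_nat_bound : ∑' n : ℕ, wE (n : ℤ) ≤ ENNReal.ofReal 2 := by
  rw [tsum_eq_zero_add' (f := fun n : ℕ => wE (n : ℤ)) ENNReal.summable]
  have h0 : wE ((0 : ℕ) : ℤ) = 0 := by simp [wE]
  rw [h0, zero_add]
  have hpt : ∀ n : ℕ, wE ((n + 1 : ℕ) : ℤ) ≤ ENNReal.ofReal ((((1 + n : ℕ) : ℝ) ^ 2)⁻¹) := by
    intro n
    have hne : ((n + 1 : ℕ) : ℤ) ≠ 0 := by exact_mod_cast Nat.succ_ne_zero n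
    rw [wE, if_neg hne]
    apply le_of_eq
    congr 2
    push_cast
    ring
  calc ∑' n : ℕ, wE ((n + 1 : ℕ) : ℤ)
      ≤ ∑' n : ℕ, ENNReal.ofReal ((((1 + n : ℕ) : ℝ) ^ 2)⁻¹) :=
        Summable.tsum_le_tsum hpt ENNReal.summable ENNReal.summable
    _ ≤ ENNReal.ofReal (2 / ((1 : ℕ) : ℝ)) := tailNat 1 le_rfl
    _ = ENNReal.ofReal 2 := by norm_num

lemma wE_neg_bound : ∑' n : ℕ, wE (-((n : ℤ) + 1)) ≤ ENNReal.ofReal 2 := by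
  have hpt : ∀ n : ℕ, wE (-((n : ℤ) + 1)) ≤ ENNReal.ofReal ((((1 + n : ℕ) : ℝ) ^ 2)⁻¹) := by
    intro n
    have hne : -((n : ℤ) + 1) ≠ 0 := by omega
    rw [wE, if_neg hne]
    apply le_of_eq
    congr 2
    push_cast
    ring
  calc ∑' n : ℕ, wE (-((n : ℤ) + 1))
      ≤ ∑' n : ℕ, ENNReal.ofReal ((((1 + n : ℕ) : ℝ) ^ 2)⁻¹) :=
        Summable.tsum_le_tsum hpt ENNReal.summable ENNReal.summable
    _ ≤ ENNReal.ofReal (2 / ((1 : ℕ) : ℝ)) := tailNat 1 le_rfl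
    _ = ENNReal.ofReal 2 := by norm_num

lemma wE_int_bound : ∑' k : ℤ, wE k ≤ ENNReal.ofReal 4 := by
  rw [tsum_of_nat_of_neg_add_one ENNReal.summable ENNReal.summable]
  calc (∑' n : ℕ, wE (n : ℤ)) + ∑' n : ℕ, wE (-((n : ℤ) + 1))
      ≤ ENNReal.ofReal 2 + ENNReal.ofReal 2 := add_le_add wE_nat_bound wE_neg_bound
    _ = ENNReal.ofReal 4 := by
        rw [← ENNReal.ofReal_add] <;> norm_num

lemma aux_real (a b x r : ℝ) (h1 : b - a ≠ 0) (h2 : a + b ≠ 0) (hx : 0 ≤ x) (hxr : x ≤ r) :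
    ((b - a) * x) ^ 2 / (a ^ 2 - b ^ 2) ^ 2 ≤ r ^ 2 * ((a + b) ^ 2)⁻¹ := by
  have hd : (a ^ 2 - b ^ 2) ^ 2 = (b - a) ^ 2 * (a + b) ^ 2 := by ring
  have h1' : (b - a) ^ 2 ≠ 0 := pow_ne_zero _ h1
  have h2' : (0 : ℝ) < (a + b) ^ 2 := by positivity
  rw [hd, mul_pow, mul_div_mul_left _ _ h1', div_eq_mul_inv]
  exact mul_le_mul_of_nonneg_right (pow_le_pow_left₀ hx hxr 2) (by positivity)

/-- Let `V(m) = m q(m)` for `q ∈ ℓ²(2ℤ)`. Then for an absolute constant `C` and all `N`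
large enough: `Σ_{n>N} Σ_{p≠±n, p ≡ n (2)} |V(p-n)|²/(n²-p²)² ≤ C (‖r‖²/N + E_N(r)²)`,
where `r(m) = max(|q(m)|, |q(-m)|)`. -/
theorem stmt17 : ∃ C : ℝ, 0 < C ∧ ∀ q : ℤ → ℂ, (∀ m, ¬ (2 ∣ m) → q m = 0) →
    Summable (fun k => ‖q k‖ ^ 2) → ∃ N₀ : ℕ, ∀ N : ℕ, N₀ ≤ N →
    ∑' n : {n : ℤ // (N : ℤ) < n},
      ∑' p : {p : ℤ // p ≠ n.1 ∧ p ≠ -n.1 ∧ (n.1 - p) % 2 = 0},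
      ENNReal.ofReal (‖((p.1 - n.1 : ℤ) : ℂ) * q (p.1 - n.1)‖ ^ 2 /
        ((n.1 : ℝ) ^ 2 - (p.1 : ℝ) ^ 2) ^ 2)
    ≤ ENNReal.ofReal C * (l2norm2 (rseq q) / (N : ℝ≥0∞) + tailNorm2 (rseq q) N) := by
  refine ⟨4, by norm_num, fun q _hodd _hsum => ⟨1, fun N hN => ?_⟩⟩
  have hNpos : (0 : ℝ) < (N : ℝ) := by exact_mod_cast hN
  set r : ℤ → ℝ := rseq q with hrdef
  set R : ℤ → ℝ≥0∞ := fun m => ENNReal.ofReal ((r m) ^ 2) with hRdef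
  set S : ℤ → ℝ≥0∞ := fun m => ∑' n : {n : ℤ // (N : ℤ) < n}, wE (2 * n.1 + m) with hSdef
  -- Step 1: inner bound for each n
  have step1 : ∀ n : {n : ℤ // (N : ℤ) < n},
      (∑' p : {p : ℤ // p ≠ n.1 ∧ p ≠ -n.1 ∧ (n.1 - p) % 2 = 0},
        ENNReal.ofReal (‖((p.1 - n.1 : ℤ) : ℂ) * q (p.1 - n.1)‖ ^ 2 /
          ((n.1 : ℝ) ^ 2 - (p.1 : ℝ) ^ 2) ^ 2))
      ≤ ∑' m : ℤ, R m * wE (2 * n.1 + m) := by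
    intro n
    have hinj : Function.Injective
        (fun p : {p : ℤ // p ≠ n.1 ∧ p ≠ -n.1 ∧ (n.1 - p) % 2 = 0} => p.1 - n.1) := by
      intro a b h
      apply Subtype.ext
      simpa using h
    have hpt : ∀ p : {p : ℤ // p ≠ n.1 ∧ p ≠ -n.1 ∧ (n.1 - p) % 2 = 0},
        ENNReal.ofReal (‖((p.1 - n.1 : ℤ) : ℂ) * q (p.1 - n.1)‖ ^ 2 /
          ((n.1 : ℝ) ^ 2 - (p.1 : ℝ) ^ 2) ^ 2)
        ≤ R (p.1 - n.1) * wE (2 * n.1 + (p.1 - n.1)) := by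
      rintro ⟨p, hp1, hp2, _⟩
      simp only
      have hm : p - n.1 ≠ 0 := sub_ne_zero.mpr hp1
      have hk : n.1 + p ≠ 0 := by
        intro h; apply hp2; omega
      have h2n : 2 * n.1 + (p - n.1) = n.1 + p := by ring
      rw [h2n]
      have hwe : wE (n.1 + p) = ENNReal.ofReal ((((n.1 + p : ℤ) : ℝ)) ^ 2)⁻¹ := if_neg hk
      rw [hwe, hRdef]
      rw [← ENNReal.ofReal_mul (by positivity)]
      apply ENNReal.ofReal_le_ofReal
      have hnorm : ‖((p - n.1 : ℤ) : ℂ) * q (p - n.1)‖ ^ 2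
          = (((p : ℝ) - (n.1 : ℝ)) * ‖q (p - n.1)‖) ^ 2 := by
        rw [norm_mul, Complex.norm_intCast, mul_pow, mul_pow, sq_abs]
        push_cast
        ring
      rw [hnorm]
      have hcast : (((n.1 + p : ℤ) : ℝ)) = (n.1 : ℝ) + (p : ℝ) := by push_cast; ring
      rw [hcast]
      have h1' : (p : ℝ) - (n.1 : ℝ) ≠ 0 := by
        have := Int.cast_ne_zero (α := ℝ) |>.mpr hm
        push_cast at this
        convert this using 1
      have h2' : (n.1 : ℝ) + (p : ℝ) ≠ 0 := by
        have := Int.cast_ne_zero (α := ℝ) |>.mpr hk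
        push_cast at this
        convert this using 1
      exact aux_real _ _ _ _ h1' h2' (norm_nonneg _) (le_max_left _ _)
    calc (∑' p : {p : ℤ // p ≠ n.1 ∧ p ≠ -n.1 ∧ (n.1 - p) % 2 = 0},
          ENNReal.ofReal (‖((p.1 - n.1 : ℤ) : ℂ) * q (p.1 - n.1)‖ ^ 2 /
            ((n.1 : ℝ) ^ 2 - (p.1 : ℝ) ^ 2) ^ 2))
        ≤ ∑' p : {p : ℤ // p ≠ n.1 ∧ p ≠ -n.1 ∧ (n.1 - p) % 2 = 0},
            R (p.1 - n.1) * wE (2 * n.1 + (p.1 - n.1)) :=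
          Summable.tsum_le_tsum hpt ENNReal.summable ENNReal.summable
      _ ≤ ∑' m : ℤ, R m * wE (2 * n.1 + m) :=
          ENNReal.tsum_comp_le_tsum_of_injective hinj (fun m => R m * wE (2 * n.1 + m))
  -- bounds on S
  have hS4 : ∀ m : ℤ, S m ≤ ENNReal.ofReal 4 := by
    intro m
    have hinj : Function.Injective (fun n : {n : ℤ // (N : ℤ) < n} => 2 * n.1 + m) := by
      intro a b h
      apply Subtype.ext
      simp only at h
      omega
    exact (ENNReal.tsum_comp_le_tsum_of_injective hinj wE).trans wE_int_bound
  have hSnear : ∀ m : ℤ, |m| < (N : ℤ) → S m ≤ ENNReal.ofReal (2 / (N : ℝ)) := by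
    intro m hm
    have hm' : -(N : ℤ) < m ∧ m < (N : ℤ) := abs_lt.mp hm
    set i : {n : ℤ // (N : ℤ) < n} → ℕ := fun n => (n.1 - ((N : ℤ) + 1)).toNat with hidef
    have hi : ∀ n : {n : ℤ // (N : ℤ) < n}, (i n : ℤ) = n.1 - ((N : ℤ) + 1) := by
      intro n
      exact Int.toNat_of_nonneg (by have := n.2; omega)
    have hinj : Function.Injective i := by
      intro a b h
      apply Subtype.ext
      have ha := hi a
      have hb := hi b
      rw [h] at ha
      omega
    have hpt : ∀ n : {n : ℤ // (N : ℤ) < n},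
        wE (2 * n.1 + m) ≤ ENNReal.ofReal ((((N + 1) + i n : ℕ) : ℝ) ^ 2)⁻¹ := by
      intro n
      have hin := hi n
      have hn2 := n.2
      have hkle : ((N + 1 + i n : ℕ) : ℤ) ≤ 2 * n.1 + m := by push_cast; omega
      have hkpos : (0 : ℤ) < ((N + 1 + i n : ℕ) : ℤ) := by push_cast; omega
      have hne : 2 * n.1 + m ≠ 0 := by omega
      rw [wE, if_neg hne]
      apply ENNReal.ofReal_le_ofReal
      have hcastle : (((N + 1 + i n : ℕ) : ℝ)) ≤ ((2 * n.1 + m : ℤ) : ℝ) := by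
        exact_mod_cast hkle
      have hcastpos : (0 : ℝ) < (((N + 1 + i n : ℕ) : ℝ)) := by exact_mod_cast hkpos
      have hsq : (((N + 1 + i n : ℕ) : ℝ)) ^ 2 ≤ ((2 * n.1 + m : ℤ) : ℝ) ^ 2 :=
        pow_le_pow_left₀ hcastpos.le hcastle 2
      have : (((2 * n.1 + m : ℤ) : ℝ)) ^ 2 = ((2 * (n.1 : ℝ) + (m : ℝ))) ^ 2 := by push_cast; ring
      rw [← this] at *
      exact inv_anti₀ (by positivity) hsq
    calc S m ≤ ∑' n : {n : ℤ // (N : ℤ) < n},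
          ENNReal.ofReal ((((N + 1) + i n : ℕ) : ℝ) ^ 2)⁻¹ :=
          Summable.tsum_le_tsum hpt ENNReal.summable ENNReal.summable
      _ ≤ ∑' j : ℕ, ENNReal.ofReal ((((N + 1) + j : ℕ) : ℝ) ^ 2)⁻¹ :=
          ENNReal.tsum_comp_le_tsum_of_injective hinj
            (fun j => ENNReal.ofReal ((((N + 1) + j : ℕ) : ℝ) ^ 2)⁻¹)
      _ ≤ ENNReal.ofReal (2 / ((N + 1 : ℕ) : ℝ)) := tailNat (N + 1) (by omega)
      _ ≤ ENNReal.ofReal (2 / (N : ℝ)) := by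
          apply ENNReal.ofReal_le_ofReal
          apply div_le_div_of_nonneg_left (by norm_num) hNpos
          push_cast; linarith
  -- assemble
  set s : Set ℤ := {m : ℤ | (N : ℤ) ≤ |m|} with hsdef
  have hsplit : (∑' m : s, R m * S m) + (∑' m : ↑sᶜ, R m * S m) = ∑' m : ℤ, R m * S m :=
    Summable.tsum_add_tsum_compl (f := fun m => R m * S m) (s := s) ENNReal.summable ENNReal.summable
  have hbound_s : (∑' m : s, R m * S m) ≤ ENNReal.ofReal 4 * tailNorm2 r N := by
    calc (∑' m : s, R m * S m)
        ≤ ∑' m : s, R m * ENNReal.ofReal 4 :=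
          Summable.tsum_le_tsum (fun m => mul_le_mul_right (hS4 m.1) _) ENNReal.summable ENNReal.summable
      _ = (∑' m : s, R m.1) * ENNReal.ofReal 4 := ENNReal.tsum_mul_right
      _ = tailNorm2 r N * ENNReal.ofReal 4 := rfl
      _ = ENNReal.ofReal 4 * tailNorm2 r N := mul_comm _ _
  have hbound_sc : (∑' m : ↑sᶜ, R m * S m) ≤ ENNReal.ofReal 4 * (l2norm2 r / (N : ℝ≥0∞)) := by
    have hmem : ∀ m : ↑sᶜ, |m.1| < (N : ℤ) := by
      intro m
      have := m.2
      simp only [hsdef, Set.mem_compl_iff, Set.mem_setOf_eq, not_le] at this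
      exact this
    calc (∑' m : ↑sᶜ, R m * S m)
        ≤ ∑' m : ↑sᶜ, R m * ENNReal.ofReal (2 / (N : ℝ)) :=
          Summable.tsum_le_tsum (fun m => mul_le_mul_right (hSnear m.1 (hmem m)) _)
            ENNReal.summable ENNReal.summable
      _ = (∑' m : ↑sᶜ, R m.1) * ENNReal.ofReal (2 / (N : ℝ)) := ENNReal.tsum_mul_right
      _ ≤ l2norm2 r * ENNReal.ofReal (2 / (N : ℝ)) := by
          apply mul_le_mul_left
          exact ENNReal.tsum_comp_le_tsum_of_injective Subtype.val_injective R
      _ ≤ ENNReal.ofReal 4 * (l2norm2 r / (N : ℝ≥0∞)) := by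
          rw [ENNReal.ofReal_div_of_pos hNpos, ENNReal.ofReal_natCast]
          rw [div_eq_mul_inv, div_eq_mul_inv, mul_left_comm]
          apply mul_le_mul'
          · exact ENNReal.ofReal_le_ofReal (by norm_num)
          · exact le_rfl
  calc (∑' n : {n : ℤ // (N : ℤ) < n},
        ∑' p : {p : ℤ // p ≠ n.1 ∧ p ≠ -n.1 ∧ (n.1 - p) % 2 = 0},
        ENNReal.ofReal (‖((p.1 - n.1 : ℤ) : ℂ) * q (p.1 - n.1)‖ ^ 2 /
          ((n.1 : ℝ) ^ 2 - (p.1 : ℝ) ^ 2) ^ 2))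
      ≤ ∑' n : {n : ℤ // (N : ℤ) < n}, ∑' m : ℤ, R m * wE (2 * n.1 + m) :=
        Summable.tsum_le_tsum step1 ENNReal.summable ENNReal.summable
    _ = ∑' m : ℤ, ∑' n : {n : ℤ // (N : ℤ) < n}, R m * wE (2 * n.1 + m) := ENNReal.tsum_comm
    _ = ∑' m : ℤ, R m * S m := tsum_congr fun m => ENNReal.tsum_mul_left
    _ = (∑' m : s, R m * S m) + (∑' m : ↑sᶜ, R m * S m) := hsplit.symm
    _ ≤ ENNReal.ofReal 4 * tailNorm2 r N + ENNReal.ofReal 4 * (l2norm2 r / (N : ℝ≥0∞)) :=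
        add_le_add hbound_s hbound_sc
    _ = ENNReal.ofReal 4 * (l2norm2 r / (N : ℝ≥0∞) + tailNorm2 r N) := by
        rw [mul_add, add_comm]
end

section
/- For any nonnegative r ∈ ℓ²(ℤ) and N ≥ 1: Σ_{n>N} r(2n)² · Σ_{p≠±n} (1/|n²-p²|) · Σ_{k≠±n} r(k+p)² ≤ C·‖r‖²·E_N(r)² for an absolute constant C. -/
open scoped ENNReal

-- Basel-type bound over ℕ
lemma aux_nat_sum : ∑' q : ℕ, ENNReal.ofReal (1 / (q : ℝ) ^ 2) ≤ 2 := by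
  have hs : Summable (fun n : ℕ => (1 : ℝ) / (n : ℝ) ^ 2) := hasSum_zeta_two.summable
  rw [← ENNReal.ofReal_tsum_of_nonneg (fun n => by positivity) hs, hasSum_zeta_two.tsum_eq]
  have hπ : Real.pi < 3.15 := Real.pi_lt_d2
  have : Real.pi ^ 2 / 6 ≤ 2 := by nlinarith [Real.pi_pos]
  calc ENNReal.ofReal (Real.pi ^ 2 / 6) ≤ ENNReal.ofReal 2 := ENNReal.ofReal_le_ofReal this
    _ = 2 := ENNReal.ofReal_ofNat 2

lemma aux_int_sum : ∑' q : ℤ, ENNReal.ofReal (1 / (q : ℝ) ^ 2) ≤ 4 := by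
  rw [tsum_of_nat_of_neg_add_one ENNReal.summable ENNReal.summable]
  have h1 : ∑' n : ℕ, ENNReal.ofReal (1 / ((n : ℤ) : ℝ) ^ 2) ≤ 2 := by
    simpa using aux_nat_sum
  have h2 : ∑' n : ℕ, ENNReal.ofReal (1 / ((-((n : ℤ) + 1) : ℤ) : ℝ) ^ 2) ≤ 2 := by
    have heq : ∀ n : ℕ, ENNReal.ofReal (1 / ((-((n : ℤ) + 1) : ℤ) : ℝ) ^ 2)
        = (fun q : ℕ => ENNReal.ofReal (1 / (q : ℝ) ^ 2)) (n + 1) := by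
      intro n; push_cast; ring_nf
    calc ∑' n : ℕ, ENNReal.ofReal (1 / ((-((n : ℤ) + 1) : ℤ) : ℝ) ^ 2)
        = ∑' n : ℕ, (fun q : ℕ => ENNReal.ofReal (1 / (q : ℝ) ^ 2)) (n + 1) := by
          exact tsum_congr heq
      _ ≤ ∑' q : ℕ, ENNReal.ofReal (1 / (q : ℝ) ^ 2) :=
          ENNReal.tsum_comp_le_tsum_of_injective (add_left_injective 1) _
      _ ≤ 2 := aux_nat_sum
  calc _ ≤ (2 : ℝ≥0∞) + 2 := add_le_add h1 h2
    _ = 4 := by norm_num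

lemma aux_p_sum (n : ℤ) (hn : 1 ≤ n) :
    ∑' p : {p : ℤ // p ≠ n ∧ p ≠ -n},
      ENNReal.ofReal (1 / |(n : ℝ) ^ 2 - (p.1 : ℝ) ^ 2|) ≤ 4 := by
  set g : ℤ → ℝ≥0∞ := fun q => ENNReal.ofReal (1 / (q : ℝ) ^ 2) with hg
  have key : ∀ p : {p : ℤ // p ≠ n ∧ p ≠ -n},
      ENNReal.ofReal (1 / |(n : ℝ) ^ 2 - (p.1 : ℝ) ^ 2|)
        ≤ 2⁻¹ * g (p.1 - n) + 2⁻¹ * g (p.1 + n) := by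
    intro ⟨p, hp1, hp2⟩
    have ha : (1 : ℝ) ≤ |((p - n : ℤ) : ℝ)| := by
      rw [← Int.cast_abs]; exact_mod_cast Int.one_le_abs (sub_ne_zero.mpr hp1)
    have hb : (1 : ℝ) ≤ |((p + n : ℤ) : ℝ)| := by
      rw [← Int.cast_abs]
      have : p + n ≠ 0 := by intro h; exact hp2 (by linarith [h])
      exact_mod_cast Int.one_le_abs this
    set x := |((p - n : ℤ) : ℝ)| with hx
    set y := |((p + n : ℤ) : ℝ)| with hy
    have hx0 : 0 < x := lt_of_lt_of_le one_pos ha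
    have hy0 : 0 < y := lt_of_lt_of_le one_pos hb
    have habs : |(n : ℝ) ^ 2 - (p : ℝ) ^ 2| = x * y := by
      rw [hx, hy, ← abs_mul]
      push_cast
      rw [← abs_neg]
      congr 1; ring
    have hineq : 1 / (x * y) ≤ 1 / 2 * (1 / x ^ 2) + 1 / 2 * (1 / y ^ 2) := by
      have hdiff : 1 / 2 * (1 / x ^ 2) + 1 / 2 * (1 / y ^ 2) - 1 / (x * y)
          = (x - y) ^ 2 / (2 * x ^ 2 * y ^ 2) := by
        field_simp; ring
      nlinarith [sq_nonneg (x - y), pow_pos hx0 2, pow_pos hy0 2,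
        div_nonneg (sq_nonneg (x - y)) (by positivity : (0:ℝ) ≤ 2 * x ^ 2 * y ^ 2)]
    have hxg : ENNReal.ofReal (1 / 2 * (1 / x ^ 2)) = 2⁻¹ * g (p - n) := by
      rw [ENNReal.ofReal_mul (by norm_num), hg]
      congr 1
      · rw [ENNReal.ofReal_div_of_pos (by norm_num)]
        simp [ENNReal.ofReal_ofNat]
      · rw [hx, sq_abs]
    have hyg : ENNReal.ofReal (1 / 2 * (1 / y ^ 2)) = 2⁻¹ * g (p + n) := by
      rw [ENNReal.ofReal_mul (by norm_num), hg]
      congr 1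
      · rw [ENNReal.ofReal_div_of_pos (by norm_num)]
        simp [ENNReal.ofReal_ofNat]
      · rw [hy, sq_abs]
    calc ENNReal.ofReal (1 / |(n : ℝ) ^ 2 - (p : ℝ) ^ 2|)
        = ENNReal.ofReal (1 / (x * y)) := by rw [habs]
      _ ≤ ENNReal.ofReal (1 / 2 * (1 / x ^ 2) + 1 / 2 * (1 / y ^ 2)) :=
          ENNReal.ofReal_le_ofReal hineq
      _ = ENNReal.ofReal (1 / 2 * (1 / x ^ 2)) + ENNReal.ofReal (1 / 2 * (1 / y ^ 2)) :=
          ENNReal.ofReal_add (by positivity) (by positivity)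
      _ = 2⁻¹ * g (p - n) + 2⁻¹ * g (p + n) := by rw [hxg, hyg]
  have hsub : ∑' p : {p : ℤ // p ≠ n ∧ p ≠ -n}, g (p.1 - n) ≤ ∑' q : ℤ, g q :=
    ENNReal.tsum_comp_le_tsum_of_injective
      (fun a b h => Subtype.ext (by have := sub_left_injective h; exact this)) g
  have hadd : ∑' p : {p : ℤ // p ≠ n ∧ p ≠ -n}, g (p.1 + n) ≤ ∑' q : ℤ, g q :=
    ENNReal.tsum_comp_le_tsum_of_injective
      (fun a b h => Subtype.ext (by have := add_left_injective n h; exact this)) g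
  have hZ : ∑' q : ℤ, g q ≤ 4 := aux_int_sum
  calc ∑' p : {p : ℤ // p ≠ n ∧ p ≠ -n}, ENNReal.ofReal (1 / |(n : ℝ) ^ 2 - (p.1 : ℝ) ^ 2|)
      ≤ ∑' p : {p : ℤ // p ≠ n ∧ p ≠ -n}, (2⁻¹ * g (p.1 - n) + 2⁻¹ * g (p.1 + n)) :=
        ENNReal.tsum_le_tsum key
    _ = 2⁻¹ * (∑' p : {p : ℤ // p ≠ n ∧ p ≠ -n}, g (p.1 - n))
        + 2⁻¹ * (∑' p : {p : ℤ // p ≠ n ∧ p ≠ -n}, g (p.1 + n)) := by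
        rw [ENNReal.tsum_add, ENNReal.tsum_mul_left, ENNReal.tsum_mul_left]
    _ ≤ 2⁻¹ * 4 + 2⁻¹ * 4 := by
        gcongr <;> [exact le_trans hsub hZ; exact le_trans hadd hZ]
    _ = 4 := by
        rw [← mul_add, show (4 : ℝ≥0∞) + 4 = 2 * 4 by norm_num, ← mul_assoc,
          ENNReal.inv_mul_cancel (by norm_num) (by norm_num), one_mul]

/-- For any nonnegative `r ∈ ℓ²(ℤ)` and `N ≥ 1`:
`Σ_{n>N} r(2n)² Σ_{p≠±n} (1/|n²-p²|) Σ_{k≠±n} r(k+p)² ≤ C ‖r‖² E_N(r)²`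
for an absolute constant `C`. -/
theorem stmt19 : ∃ C : ℝ, 0 < C ∧ ∀ r : ℤ → ℝ, (∀ k, 0 ≤ r k) →
    Summable (fun k => (r k) ^ 2) → ∀ N : ℕ, 1 ≤ N →
    ∑' n : {n : ℤ // (N : ℤ) < n},
      ENNReal.ofReal ((r (2 * n.1)) ^ 2) *
      ∑' p : {p : ℤ // p ≠ n.1 ∧ p ≠ -n.1},
        ENNReal.ofReal (1 / |(n.1 : ℝ) ^ 2 - (p.1 : ℝ) ^ 2|) *
        ∑' k : {k : ℤ // k ≠ n.1 ∧ k ≠ -n.1}, ENNReal.ofReal ((r (k.1 + p.1)) ^ 2)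
    ≤ ENNReal.ofReal C * l2norm2 r * tailNorm2 r N := by
  refine ⟨4, by norm_num, fun r hr hsum N hN => ?_⟩
  have hinner : ∀ (n : ℤ) (p : ℤ),
      ∑' k : {k : ℤ // k ≠ n ∧ k ≠ -n}, ENNReal.ofReal ((r (k.1 + p)) ^ 2) ≤ l2norm2 r :=
    fun n p =>
      ENNReal.tsum_comp_le_tsum_of_injective
        (f := fun k : {k : ℤ // k ≠ n ∧ k ≠ -n} => k.1 + p)
        (fun a b h => Subtype.ext (add_left_injective p h))
        (fun m => ENNReal.ofReal ((r m) ^ 2))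
  have hmid : ∀ n : {n : ℤ // (N : ℤ) < n},
      ∑' p : {p : ℤ // p ≠ n.1 ∧ p ≠ -n.1},
        ENNReal.ofReal (1 / |(n.1 : ℝ) ^ 2 - (p.1 : ℝ) ^ 2|) *
        ∑' k : {k : ℤ // k ≠ n.1 ∧ k ≠ -n.1}, ENNReal.ofReal ((r (k.1 + p.1)) ^ 2)
      ≤ 4 * l2norm2 r := by
    intro n
    have hN' : (1 : ℤ) ≤ (N : ℤ) := by exact_mod_cast hN
    have h1 : 1 ≤ n.1 := by have := n.2; omega
    calc ∑' p : {p : ℤ // p ≠ n.1 ∧ p ≠ -n.1},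
          ENNReal.ofReal (1 / |(n.1 : ℝ) ^ 2 - (p.1 : ℝ) ^ 2|) *
          ∑' k : {k : ℤ // k ≠ n.1 ∧ k ≠ -n.1}, ENNReal.ofReal ((r (k.1 + p.1)) ^ 2)
        ≤ ∑' p : {p : ℤ // p ≠ n.1 ∧ p ≠ -n.1},
          ENNReal.ofReal (1 / |(n.1 : ℝ) ^ 2 - (p.1 : ℝ) ^ 2|) * l2norm2 r :=
          ENNReal.tsum_le_tsum (fun p => mul_le_mul_right (hinner n.1 p.1) _)
      _ = (∑' p : {p : ℤ // p ≠ n.1 ∧ p ≠ -n.1},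
          ENNReal.ofReal (1 / |(n.1 : ℝ) ^ 2 - (p.1 : ℝ) ^ 2|)) * l2norm2 r :=
          ENNReal.tsum_mul_right
      _ ≤ 4 * l2norm2 r := mul_le_mul_left (aux_p_sum n.1 h1) _
  have htail : ∑' n : {n : ℤ // (N : ℤ) < n}, ENNReal.ofReal ((r (2 * n.1)) ^ 2)
      ≤ tailNorm2 r N :=
    ENNReal.tsum_comp_le_tsum_of_injective
      (f := fun n : {n : ℤ // (N : ℤ) < n} =>
        (⟨2 * n.1, by have := n.2; rw [abs_of_nonneg (by omega)]; omega⟩ :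
          {k : ℤ // (N : ℤ) ≤ |k|}))
      (fun a b h => Subtype.ext (by
        have h' := congrArg Subtype.val h
        simp only at h'
        omega))
      (fun k : {k : ℤ // (N : ℤ) ≤ |k|} => ENNReal.ofReal ((r k.1) ^ 2))
  calc ∑' n : {n : ℤ // (N : ℤ) < n},
        ENNReal.ofReal ((r (2 * n.1)) ^ 2) *
        ∑' p : {p : ℤ // p ≠ n.1 ∧ p ≠ -n.1},
          ENNReal.ofReal (1 / |(n.1 : ℝ) ^ 2 - (p.1 : ℝ) ^ 2|) *
          ∑' k : {k : ℤ // k ≠ n.1 ∧ k ≠ -n.1}, ENNReal.ofReal ((r (k.1 + p.1)) ^ 2)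
      ≤ ∑' n : {n : ℤ // (N : ℤ) < n},
        ENNReal.ofReal ((r (2 * n.1)) ^ 2) * (4 * l2norm2 r) :=
        ENNReal.tsum_le_tsum (fun n => mul_le_mul_right (hmid n) _)
    _ = (∑' n : {n : ℤ // (N : ℤ) < n}, ENNReal.ofReal ((r (2 * n.1)) ^ 2))
        * (4 * l2norm2 r) := ENNReal.tsum_mul_right
    _ ≤ tailNorm2 r N * (4 * l2norm2 r) := mul_le_mul_left htail _
    _ = ENNReal.ofReal 4 * l2norm2 r * tailNorm2 r N := by
        rw [ENNReal.ofReal_ofNat]; ring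
end
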